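/- arXiv:2102.08089 — 8 statements merged into one kernel-verified Lean document; each statement's English description precedes it below -/
import Mathlib

section
/- Let φ₀, φ₁ ∈ OR be such that φ₀/φ₁ is bounded in a neighbourhood of infinity, and let ψ ∈ B be pseudoconcave in a neighbourhood of infinity (i.e., ψ is an interpolation parameter). Then the function φ defined by φ(t) := φ₀(t)·ψ(φ₁(t)/φ₀(t)) for t ≥ 1 belongs to the class OR. -/
open MeasureTheory Filter Set

/-- A Borel measurable function `φ : [1,∞) → (0,∞)` is OR-varying at infinity:
there exist `a > 1` and `c ≥ 1` with `c⁻¹ ≤ φ(λt)/φ(t) ≤ c` for all `t ≥ 1`, `λ ∈ [1,a]`. -/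
def ORClass (φ : ℝ → ℝ) : Prop :=
  Measurable φ ∧ (∀ t, 1 ≤ t → 0 < φ t) ∧
    ∃ a > 1, ∃ c ≥ 1, ∀ t, 1 ≤ t → ∀ l, 1 ≤ l → l ≤ a →
      c⁻¹ ≤ φ (l * t) / φ t ∧ φ (l * t) / φ t ≤ c

/-- The class `B` of Borel measurable functions `ψ : (0,∞) → (0,∞)` that are bounded on each
compact interval `[a,b] ⊂ (0,∞)` and such that `1/ψ` is bounded on each ray `[r,∞)`, `r > 0`. -/
def BClass (ψ : ℝ → ℝ) : Prop :=
  Measurable ψ ∧ (∀ t, 0 < t → 0 < ψ t) ∧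
    (∀ a b : ℝ, 0 < a → a < b → ∃ M, ∀ t, a ≤ t → t ≤ b → ψ t ≤ M) ∧
    (∀ r : ℝ, 0 < r → ∃ M, ∀ t, r ≤ t → 1 / ψ t ≤ M)

/-- `ψ` is pseudoconcave in a neighbourhood of infinity: there are `r > 0` and a concave
function `ψ₁ : (r,∞) → (0,∞)` such that `ψ/ψ₁` and `ψ₁/ψ` are bounded on `(r,∞)`. -/
def PseudoconcaveAtTop (ψ : ℝ → ℝ) : Prop :=
  ∃ r > (0 : ℝ), ∃ ψ₁ : ℝ → ℝ, (∀ t, r < t → 0 < ψ₁ t) ∧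
    ConcaveOn ℝ (Set.Ioi r) ψ₁ ∧
    ∃ M : ℝ, ∀ t, r < t → ψ t / ψ₁ t ≤ M ∧ ψ₁ t / ψ t ≤ M

/-! Under `t ↦ λt` with `λ ∈ [1, a]`, both `φ₀` and `φ₁` change by at most a bounded factor, hence
so does `u = φ₁/φ₀`; moreover `u` is bounded away from `0` on `[1, ∞)`, by the OR bounds on compact
intervals and by the boundedness of `φ₀/φ₁` near infinity. It remains to see that `ψ` changes by at
most a bounded factor when its argument, kept away from `0`, does. For large arguments `ψ` is
comparable to a positive concave `ψ₁`, which is nondecreasing and satisfies the chord bound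
`ψ₁ y ≤ (y - r')/(x - r') · ψ₁ x` for `x ≤ y`; for bounded arguments `ψ ∈ B` is bounded above
and below. -/

namespace ConcaveOn

variable {r : ℝ} {f : ℝ → ℝ}

theorem monotoneOn_Ioi_of_pos (hf : ConcaveOn ℝ (Ioi r) f) (hpos : ∀ t, r < t → 0 < f t) :
    MonotoneOn f (Ioi r) := by
  -- past a point where `f` decreases, concavity keeps its slope negative, so `f` reaches `0` at `z`
  intro x hx y hy hxy
  by_contra! hyx
  have hxy' : x < y := hxy.lt_of_ne (by rintro rfl; exact lt_irrefl _ hyx)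
  set σ := (f y - f x) / (y - x)
  have hσ : σ < 0 := div_neg_of_neg_of_pos (by linarith) (by linarith)
  set z := y - f y / σ
  have hyz : y < z := by
    have : f y / σ < 0 := div_neg_of_pos_of_neg (hpos y hy) hσ
    linarith
  have hz : z ∈ Ioi r := lt_trans hy hyz
  have hslope := hf.slope_anti_adjacent hx hz hxy' hyz
  rw [div_le_iff₀ (sub_pos.2 hyz)] at hslope
  have hzero : σ * (z - y) = - f y := by
    rw [show z - y = -(f y / σ) by ring, mul_neg, mul_div_cancel₀ _ hσ.ne]
  linarith [hpos z hz]

theorem le_div_mul_of_pos (hf : ConcaveOn ℝ (Ioi r) f) (hpos : ∀ t, r < t → 0 < f t)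
    {r' x y : ℝ} (hr' : r < r') (hx : r' < x) (hxy : x ≤ y) :
    f y ≤ (y - r') / (x - r') * f x := by
  rcases hxy.eq_or_lt with rfl | hxy
  · rw [div_self (sub_pos.2 hx).ne', one_mul]
  have hslope := hf.slope_anti_adjacent (x := r') (y := x) (z := y) hr'
    (lt_trans hr' (hx.trans hxy)) hx hxy
  rw [div_le_div_iff₀ (sub_pos.2 hxy) (sub_pos.2 hx)] at hslope
  rw [div_mul_eq_mul_div, le_div_iff₀ (sub_pos.2 hx)]
  nlinarith [hpos r' hr']

theorem le_two_mul_mul_of_le_mul (hf : ConcaveOn ℝ (Ioi r) f) (hpos : ∀ t, r < t → 0 < f t)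
    (hr : 0 ≤ r) {K x y : ℝ} (hK : 1 ≤ K) (hx : 2 * r < x) (hy : 2 * r < y) (hyx : y ≤ K * x) :
    f y ≤ 2 * K * f x := by
  have hfx := hpos x (by linarith)
  rcases le_total y x with hyx' | hxy
  · calc f y ≤ f x := hf.monotoneOn_Ioi_of_pos hpos (show r < y by linarith)
            (show r < x by linarith) hyx'
      _ ≤ 2 * K * f x := le_mul_of_one_le_left hfx.le (by linarith)
  · have hchord := hf.le_div_mul_of_pos hpos (r' := x / 2) (by linarith) (by linarith) hxy
    have hfactor : (y - x / 2) / (x - x / 2) ≤ 2 * K := by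
      rw [div_le_iff₀ (by linarith)]; nlinarith
    calc f y ≤ (y - x / 2) / (x - x / 2) * f x := hchord
      _ ≤ 2 * K * f x := mul_le_mul_of_nonneg_right hfactor hfx.le

end ConcaveOn

def WithinFactor (c x y : ℝ) : Prop := x ≤ c * y ∧ y ≤ c * x

namespace WithinFactor

variable {c d x y z x' y' : ℝ}

theorem mono (h : WithinFactor c x y) (hcd : c ≤ d) (hx : 0 ≤ x) (hy : 0 ≤ y) :
    WithinFactor d x y :=
  ⟨h.1.trans (mul_le_mul_of_nonneg_right hcd hy), h.2.trans (mul_le_mul_of_nonneg_right hcd hx)⟩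

theorem trans (h : WithinFactor c x y) (h' : WithinFactor d y z) (hc : 0 ≤ c) (hd : 0 ≤ d) :
    WithinFactor (c * d) x z := by
  constructor
  · calc x ≤ c * y := h.1
      _ ≤ c * (d * z) := mul_le_mul_of_nonneg_left h'.1 hc
      _ = c * d * z := by ring
  · calc z ≤ d * y := h'.2
      _ ≤ d * (c * x) := mul_le_mul_of_nonneg_left h.2 hd
      _ = c * d * x := by ring

theorem mul (h : WithinFactor c x y) (h' : WithinFactor d x' y') (hx : 0 ≤ x) (hy : 0 ≤ y)
    (hx' : 0 ≤ x') (hy' : 0 ≤ y') : WithinFactor (c * d) (x * x') (y * y') := by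
  constructor
  · calc x * x' ≤ (c * y) * (d * y') := mul_le_mul h.1 h'.1 hx' (hx.trans h.1)
      _ = c * d * (y * y') := by ring
  · calc y * y' ≤ (c * x) * (d * x') := mul_le_mul h.2 h'.2 hy' (hy.trans h.2)
      _ = c * d * (x * x') := by ring

theorem div (h : WithinFactor c x y) (h' : WithinFactor d x' y') (hx : 0 ≤ x) (hy : 0 ≤ y)
    (hx' : 0 < x') (hy' : 0 < y') : WithinFactor (c * d) (x / x') (y / y') := by
  constructor
  · rw [div_le_iff₀ hx', mul_div_assoc', div_mul_eq_mul_div, le_div_iff₀ hy']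
    calc x * y' ≤ (c * y) * (d * x') := mul_le_mul h.1 h'.2 hy'.le (hx.trans h.1)
      _ = c * d * y * x' := by ring
  · rw [div_le_iff₀ hy', mul_div_assoc', div_mul_eq_mul_div, le_div_iff₀ hx']
    calc y * x' ≤ (c * x) * (d * y') := mul_le_mul h.2 h'.1 hx'.le (hy.trans h.2)
      _ = c * d * x * y' := by ring

end WithinFactor

theorem withinFactor_iff_inv_le_div {c x y : ℝ} (hc : 0 < c) (hx : 0 < x) (hy : 0 < y) :
    WithinFactor c x y ↔ c⁻¹ ≤ y / x ∧ y / x ≤ c := by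
  rw [WithinFactor, inv_le_comm₀ hc (div_pos hy hx), inv_div, div_le_iff₀ hy, div_le_iff₀ hx,
    mul_comm c y, mul_comm c x]

theorem orClass_iff_withinFactor {φ : ℝ → ℝ} :
    ORClass φ ↔ Measurable φ ∧ (∀ t, 1 ≤ t → 0 < φ t) ∧
      ∃ a > 1, ∃ c ≥ 1, ∀ t, 1 ≤ t → ∀ l, 1 ≤ l → l ≤ a → WithinFactor c (φ t) (φ (l * t)) := by
  refine and_congr_right fun _ => and_congr_right fun hpos => ?_
  refine exists_congr fun a => and_congr_right fun _ => exists_congr fun c =>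
    and_congr_right fun hc => forall₂_congr fun t ht => forall₃_congr fun l hl _ => ?_
  exact (withinFactor_iff_inv_le_div (by linarith) (hpos t ht)
    (hpos _ (one_le_mul_of_one_le_of_one_le hl ht))).symm

theorem withinFactor_pow_of_le_pow {φ : ℝ → ℝ} {a c : ℝ} (ha : 1 ≤ a) (hc : 1 ≤ c)
    (hpos : ∀ t, 1 ≤ t → 0 < φ t)
    (hφ : ∀ t, 1 ≤ t → ∀ l, 1 ≤ l → l ≤ a → WithinFactor c (φ t) (φ (l * t))) :
    ∀ n : ℕ, ∀ t, 1 ≤ t → t ≤ a ^ n → WithinFactor (c ^ n) (φ 1) (φ t) := by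
  intro n
  induction n with
  | zero =>
    intro t ht1 ht
    obtain rfl : t = 1 := le_antisymm (by simpa using ht) ht1
    simp [WithinFactor]
  | succ n ih =>
    intro t ht1 ht
    rcases le_or_gt t a with hta | hat
    · have h := hφ 1 le_rfl t ht1 hta
      rw [mul_one] at h
      exact h.mono (le_self_pow₀ hc n.succ_ne_zero) (hpos 1 le_rfl).le (hpos t ht1).le
    · have ha0 : 0 < a := by linarith
      have hs1 : 1 ≤ t / a := by rw [le_div_iff₀ ha0]; linarith
      have hsn : t / a ≤ a ^ n := by rw [div_le_iff₀ ha0, ← pow_succ]; exact ht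
      have h := hφ (t / a) hs1 a ha le_rfl
      rw [mul_div_cancel₀ _ ha0.ne'] at h
      rw [pow_succ]
      exact (ih (t / a) hs1 hsn).trans h (by positivity) (by linarith)

theorem ORClass.exists_withinFactor_of_le {φ : ℝ → ℝ} (hφ : ORClass φ) (Y : ℝ) :
    ∃ C ≥ 1, ∀ t, 1 ≤ t → t ≤ Y → WithinFactor C (φ 1) (φ t) := by
  obtain ⟨_, hpos, a, ha, c, hc, hac⟩ := orClass_iff_withinFactor.1 hφ
  obtain ⟨n, hn⟩ := pow_unbounded_of_one_lt Y ha
  exact ⟨c ^ n, one_le_pow₀ hc, fun t ht1 htY =>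
    withinFactor_pow_of_le_pow ha.le hc hpos hac n t ht1 (htY.trans hn.le)⟩

theorem ORClass.exists_pos_le_div {φ₀ φ₁ : ℝ → ℝ} (h0 : ORClass φ₀) (h1 : ORClass φ₁)
    (hbdd : ∃ T : ℝ, 1 ≤ T ∧ ∃ M : ℝ, ∀ t, T ≤ t → φ₀ t / φ₁ t ≤ M) :
    ∃ m > 0, ∀ t, 1 ≤ t → m ≤ φ₁ t / φ₀ t := by
  obtain ⟨T, hT, M, hM⟩ := hbdd
  have hpos₀ := h0.2.1
  have hpos₁ := h1.2.1
  have hM0 : 0 < M := (div_pos (hpos₀ T hT) (hpos₁ T hT)).trans_le (hM T le_rfl)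
  obtain ⟨C₀, hC₀, hφ₀⟩ := h0.exists_withinFactor_of_le T
  obtain ⟨C₁, hC₁, hφ₁⟩ := h1.exists_withinFactor_of_le T
  have hC : 0 < C₁ * C₀ := by positivity
  have hu1 : 0 < φ₁ 1 / φ₀ 1 := div_pos (hpos₁ 1 le_rfl) (hpos₀ 1 le_rfl)
  refine ⟨min (φ₁ 1 / φ₀ 1 / (C₁ * C₀)) M⁻¹, lt_min (by positivity) (inv_pos.2 hM0), ?_⟩
  intro t ht
  have hut : 0 < φ₁ t / φ₀ t := div_pos (hpos₁ t ht) (hpos₀ t ht)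
  rcases le_total t T with htT | hTt
  · have h := (hφ₁ t ht htT).div (hφ₀ t ht htT) (hpos₁ 1 le_rfl).le (hpos₁ t ht).le
      (hpos₀ 1 le_rfl) (hpos₀ t ht)
    exact (min_le_left _ _).trans (div_le_of_le_mul₀ hC.le hut.le (by linarith [h.1]))
  · calc min (φ₁ 1 / φ₀ 1 / (C₁ * C₀)) M⁻¹ ≤ M⁻¹ := min_le_right _ _
      _ ≤ (φ₀ t / φ₁ t)⁻¹ := inv_anti₀ (div_pos (hpos₀ t ht) (hpos₁ t ht)) (hM t hTt)
      _ = φ₁ t / φ₀ t := inv_div _ _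

theorem PseudoconcaveAtTop.exists_le_mul_mul {ψ : ℝ → ℝ} (hpc : PseudoconcaveAtTop ψ)
    (hψ : ∀ t, 0 < t → 0 < ψ t) :
    ∃ P > 0, ∃ A, ∀ K, 1 ≤ K → ∀ s s', P ≤ s → P ≤ s' → s' ≤ K * s → ψ s' ≤ A * K * ψ s := by
  obtain ⟨r, hr, ψ₁, hψ₁, hconc, M, hM⟩ := hpc
  refine ⟨2 * r + 1, by linarith, 2 * M ^ 2, fun K hK s s' hs hs' hss' => ?_⟩
  have hrs : r < s := by linarith
  have hrs' : r < s' := by linarith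
  have hM0 : 0 ≤ M := (div_pos (hψ₁ s hrs) (hψ s (by linarith))).le.trans (hM s hrs).2
  have hψs' : ψ s' ≤ M * ψ₁ s' := by
    have h := (hM s' hrs').1
    rwa [div_le_iff₀ (hψ₁ s' hrs')] at h
  have hψ₁s : ψ₁ s ≤ M * ψ s := by
    have h := (hM s hrs).2
    rwa [div_le_iff₀ (hψ s (by linarith))] at h
  calc ψ s' ≤ M * ψ₁ s' := hψs'
    _ ≤ M * (2 * K * ψ₁ s) := mul_le_mul_of_nonneg_left
        (hconc.le_two_mul_mul_of_le_mul hψ₁ hr.le hK (by linarith) (by linarith) hss') hM0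
    _ ≤ M * (2 * K * (M * ψ s)) := by gcongr
    _ = 2 * M ^ 2 * K * ψ s := by ring

theorem BClass.exists_le_mul_of_le {ψ : ℝ → ℝ} (hψ : BClass ψ) {m : ℝ} (hm : 0 < m) (Y : ℝ) :
    ∃ B, ∀ s s', m ≤ s → m ≤ s' → s' ≤ Y → ψ s' ≤ B * ψ s := by
  obtain ⟨_, hpos, hbdd, hinv⟩ := hψ
  obtain ⟨B₁, hB₁⟩ := hbdd m (max Y (m + 1)) hm (lt_max_of_lt_right (lt_add_one m))
  obtain ⟨B₂, hB₂⟩ := hinv m hm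
  refine ⟨B₁ * B₂, fun s s' hs hs' hs'Y => ?_⟩
  have hψs := hpos s (hm.trans_le hs)
  have hψs' : ψ s' ≤ B₁ := hB₁ s' hs' (hs'Y.trans (le_max_left _ _))
  have hB₂s : 1 ≤ B₂ * ψ s := by
    have h := hB₂ s hs
    rwa [div_le_iff₀ hψs] at h
  calc ψ s' ≤ B₁ := hψs'
    _ ≤ B₁ * (B₂ * ψ s) := le_mul_of_one_le_right ((hpos s' (hm.trans_le hs')).le.trans hψs') hB₂s
    _ = B₁ * B₂ * ψ s := by ring

theorem BClass.withinFactor_of_pseudoconcaveAtTop {ψ : ℝ → ℝ} (hψ : BClass ψ)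
    (hpc : PseudoconcaveAtTop ψ) {m : ℝ} (hm : 0 < m) {K : ℝ} (hK : 1 ≤ K) :
    ∃ C ≥ 1, ∀ s s', m ≤ s → m ≤ s' → WithinFactor K s s' → WithinFactor C (ψ s) (ψ s') := by
  obtain ⟨P, hP, A, hA⟩ := hpc.exists_le_mul_mul hψ.2.1
  obtain ⟨B, hB⟩ := hψ.exists_le_mul_of_le hm (K * P)
  set C := max 1 (max (A * K) B)
  have hle : ∀ s s', m ≤ s → m ≤ s' → s' ≤ K * s → ψ s' ≤ C * ψ s := by
    intro s s' hs hs' hss'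
    have hψs := hψ.2.1 s (hm.trans_le hs)
    by_cases hlarge : P ≤ s ∧ P ≤ s'
    · calc ψ s' ≤ A * K * ψ s := hA K hK s s' hlarge.1 hlarge.2 hss'
        _ ≤ C * ψ s := by gcongr; exact (le_max_left _ _).trans (le_max_right _ _)
    · have hs'P : s' ≤ K * P := by
        rcases not_and_or.1 hlarge with h | h <;> nlinarith
      calc ψ s' ≤ B * ψ s := hB s s' hs hs' hs'P
        _ ≤ C * ψ s := by gcongr; exact (le_max_right _ _).trans (le_max_right _ _)
  exact ⟨C, le_max_left _ _, fun s s' hs hs' hss' =>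
    ⟨hle s' s hs' hs hss'.1, hle s s' hs hs' hss'.2⟩⟩

/-- If `φ₀, φ₁ ∈ OR`, `φ₀/φ₁` is bounded in a neighbourhood of infinity, and `ψ ∈ B` is
pseudoconcave in a neighbourhood of infinity (i.e. an interpolation parameter), then
`φ(t) = φ₀(t) · ψ(φ₁(t)/φ₀(t))` belongs to `OR`. -/
theorem or_of_interpolation_parameter (φ₀ φ₁ ψ : ℝ → ℝ)
    (h0 : ORClass φ₀) (h1 : ORClass φ₁)
    (hbdd : ∃ T : ℝ, 1 ≤ T ∧ ∃ M : ℝ, ∀ t, T ≤ t → φ₀ t / φ₁ t ≤ M)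
    (hψ : BClass ψ) (hpc : PseudoconcaveAtTop ψ) :
    ORClass (fun t => φ₀ t * ψ (φ₁ t / φ₀ t)) := by
  obtain ⟨hmeas₀, hpos₀, a₀, ha₀, c₀, hc₀, hφ₀⟩ := orClass_iff_withinFactor.1 h0
  obtain ⟨hmeas₁, hpos₁, a₁, ha₁, c₁, hc₁, hφ₁⟩ := orClass_iff_withinFactor.1 h1
  obtain ⟨m, hm, hmu⟩ := h0.exists_pos_le_div h1 hbdd
  obtain ⟨C, hC, hψC⟩ := hψ.withinFactor_of_pseudoconcaveAtTop hpc hm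
    (one_le_mul_of_one_le_of_one_le hc₁ hc₀)
  have hu : ∀ t, 1 ≤ t → 0 < φ₁ t / φ₀ t := fun t ht => div_pos (hpos₁ t ht) (hpos₀ t ht)
  refine orClass_iff_withinFactor.2 ⟨hmeas₀.mul (hψ.1.comp (hmeas₁.div hmeas₀)),
    fun t ht => mul_pos (hpos₀ t ht) (hψ.2.1 _ (hu t ht)), min a₀ a₁, lt_min ha₀ ha₁,
    c₀ * C, one_le_mul_of_one_le_of_one_le hc₀ hC, fun t ht l hl hla => ?_⟩
  have hlt : 1 ≤ l * t := one_le_mul_of_one_le_of_one_le hl ht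
  have hφ₀t := hφ₀ t ht l hl (hla.trans (min_le_left _ _))
  have hratio := (hφ₁ t ht l hl (hla.trans (min_le_right _ _))).div hφ₀t (hpos₁ t ht).le
    (hpos₁ _ hlt).le (hpos₀ t ht) (hpos₀ _ hlt)
  exact hφ₀t.mul (hψC _ _ (hmu t ht) (hmu _ hlt) hratio) (hpos₀ t ht).le (hpos₀ _ hlt).le
    (hψ.2.1 _ (hu t ht)).le (hψ.2.1 _ (hu _ hlt)).le
end

section
/- Let s₀, s₁ ∈ ℝ with s₀ < s₁ and let ψ ∈ B. Define φ(t) := t^{s₀}·ψ(t^{s₁−s₀}) for t ≥ 1. Then ψ is pseudoconcave in a neighbourhood of infinity (equivalently, ψ is an interpolation parameter) if and only if there exist positive numbers c₀ and c₁ such that c₀·λ^{s₀} ≤ φ(λt)/φ(t) ≤ c₁·λ^{s₁} for all t ≥ 1 and all λ ≥ 1. -/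
/-!
The substitution `u = t ^ (s₁ - s₀)`, `μ = l ^ (s₁ - s₀)` turns the two bounds on `φ(lt)/φ(t)`
into `c₀ ψ(u) ≤ ψ(μu) ≤ c₁ μ ψ(u)` for `u, μ ≥ 1`: `ψ` is almost nondecreasing and `ψ(u)/u`
almost nonincreasing. A positive concave function on `(r, ∞)` has both properties on `[a, ∞)` for
`a > 2r` (with constants `1/2` and `2`), they pass to equivalent functions, and for `ψ ∈ B` they
extend from `[a, ∞)` to `[1, ∞)` since `ψ` is bounded above on `[1, a]` and away from zero on
`[1, ∞)`. Conversely, under these bounds the infimum of the affine functions `t ↦ ψ(s)(1 + t/s)`,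
`s ≥ 1`, is concave and lies between `min(c₀, 1/c₁) ψ` and `2 ψ` on `[1, ∞)`.
-/

open MeasureTheory Filter Set

/-- Quasiconcavity up to constants on `[a, ∞)` in the sense of interpolation theory (`ψ`
nondecreasing and `ψ t / t` nonincreasing); unrelated to Mathlib's `QuasiconcaveOn`. -/
def AlmostQuasiconcaveFrom (a : ℝ) (ψ : ℝ → ℝ) : Prop :=
  ∃ c₀ > (0 : ℝ), ∃ c₁ > (0 : ℝ), ∀ u, a ≤ u → ∀ μ, 1 ≤ μ →
    c₀ * ψ u ≤ ψ (μ * u) ∧ ψ (μ * u) ≤ c₁ * μ * ψ u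

theorem ConcaveOn.le_two_mul_of_le {f : ℝ → ℝ} {r x y : ℝ} (hf : ConcaveOn ℝ (Ioi r) f)
    (hf₀ : ∀ t ∈ Ioi r, 0 ≤ f t) (hx : r < x) (hxy : x ≤ y) : f x ≤ 2 * f y := by
  have hz : 2 * y - x ∈ Ioi r := by rw [mem_Ioi]; linarith
  have h := hf.2 hx hz (by norm_num : (0 : ℝ) ≤ 1 / 2) (by norm_num : (0 : ℝ) ≤ 1 / 2)
    (by norm_num)
  simp only [smul_eq_mul, show 1 / 2 * x + 1 / 2 * (2 * y - x) = y by ring] at h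
  linarith [hf₀ _ hz]

theorem ConcaveOn.le_two_mul_sub_one_mul {f : ℝ → ℝ} {r u μ : ℝ} (hf : ConcaveOn ℝ (Ioi r) f)
    (hf₀ : ∀ t ∈ Ioi r, 0 ≤ f t) (hr : 0 ≤ r) (hu : 2 * r < u) (hμ : 1 ≤ μ) :
    f (μ * u) ≤ (2 * μ - 1) * f u := by
  have hw : u / 2 ∈ Ioi r := by rw [mem_Ioi]; linarith
  have hv : μ * u ∈ Ioi r := by rw [mem_Ioi]; nlinarith
  have hμ' : 0 < 2 * μ - 1 := by linarith
  have ha : 0 ≤ (2 * μ - 2) / (2 * μ - 1) := div_nonneg (by linarith) hμ'.le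
  have h := hf.2 hw hv ha (by positivity : 0 ≤ 1 / (2 * μ - 1)) (by field_simp; ring)
  have hu' : (2 * μ - 2) / (2 * μ - 1) * (u / 2) + 1 / (2 * μ - 1) * (μ * u) = u := by
    field_simp; ring
  simp only [smul_eq_mul, hu'] at h
  have h' : f (μ * u) / (2 * μ - 1) ≤ f u := by
    rw [div_eq_inv_mul, ← one_div]; linarith [mul_nonneg ha (hf₀ _ hw)]
  rwa [div_le_iff₀' hμ'] at h'

theorem ConcaveOn.almostQuasiconcaveFrom {f : ℝ → ℝ} {r a : ℝ} (hf : ConcaveOn ℝ (Ioi r) f)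
    (hf₀ : ∀ t ∈ Ioi r, 0 ≤ f t) (hr : 0 ≤ r) (ha : 2 * r < a) :
    AlmostQuasiconcaveFrom a f := by
  refine ⟨1 / 2, by norm_num, 2, by norm_num, fun u hu μ hμ => ⟨?_, ?_⟩⟩
  · linarith [hf.le_two_mul_of_le hf₀ (by linarith : r < u) (by nlinarith : u ≤ μ * u)]
  · have hfu := hf₀ u (by rw [mem_Ioi]; linarith)
    linarith [hf.le_two_mul_sub_one_mul hf₀ hr (by linarith : 2 * r < u) hμ]

theorem AlmostQuasiconcaveFrom.of_le_mul {f g : ℝ → ℝ} {a M : ℝ} (hf : AlmostQuasiconcaveFrom a f)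
    (ha : 0 ≤ a) (hM : 0 < M) (hfg : ∀ t, a ≤ t → g t ≤ M * f t ∧ f t ≤ M * g t) :
    AlmostQuasiconcaveFrom a g := by
  obtain ⟨c₀, hc₀, c₁, hc₁, hf⟩ := hf
  refine ⟨c₀ / M ^ 2, by positivity, c₁ * M ^ 2, by positivity, fun u hu μ hμ => ?_⟩
  have hv : a ≤ μ * u := by nlinarith
  obtain ⟨hgu, hfu⟩ := hfg u hu
  obtain ⟨hgv, hfv⟩ := hfg (μ * u) hv
  obtain ⟨hlow, hup⟩ := hf u hu μ hμ
  constructor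
  · calc c₀ / M ^ 2 * g u ≤ c₀ / M ^ 2 * (M * f u) := by gcongr
      _ = c₀ * f u / M := by field_simp
      _ ≤ f (μ * u) / M := by gcongr
      _ ≤ g (μ * u) := by rwa [div_le_iff₀' hM]
  · calc g (μ * u) ≤ M * f (μ * u) := hgv
      _ ≤ M * (c₁ * μ * f u) := by gcongr
      _ ≤ M * (c₁ * μ * (M * g u)) := by gcongr
      _ = c₁ * M ^ 2 * μ * g u := by ring

theorem AlmostQuasiconcaveFrom.extend {ψ : ℝ → ℝ} {a k K : ℝ} (h : AlmostQuasiconcaveFrom a ψ)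
    (ha : 1 ≤ a) (hk : 0 < k) (hlow : ∀ t, 1 ≤ t → k ≤ ψ t)
    (hup : ∀ t, 1 ≤ t → t ≤ a → ψ t ≤ K) : AlmostQuasiconcaveFrom 1 ψ := by
  obtain ⟨c₀, hc₀, c₁, hc₁, h⟩ := h
  have hKk : 1 ≤ K / k := by
    rw [le_div_iff₀ hk, one_mul]; exact (hlow 1 le_rfl).trans (hup 1 le_rfl ha)
  have hK : 0 < K := by linarith [(le_div_iff₀ hk).1 hKk]
  set C := max c₁ 1 * (K / k) with hC
  have hc₁C : c₁ ≤ C := (le_max_left _ _).trans (le_mul_of_one_le_right (by positivity) hKk)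
  have hKC : K / k ≤ C := le_mul_of_one_le_left (by positivity) (le_max_right _ _)
  refine ⟨min c₀ (k / K), by positivity, C, by positivity, fun u hu μ hμ => ?_⟩
  have hψu : 0 < ψ u := hk.trans_le (hlow u hu)
  have hv : 1 ≤ μ * u := one_le_mul_of_one_le_of_one_le hμ hu
  rcases le_or_gt a u with hau | hua
  · obtain ⟨h₀, h₁⟩ := h u hau μ hμ
    constructor
    · exact (mul_le_mul_of_nonneg_right (min_le_left _ _) hψu.le).trans h₀
    · exact h₁.trans (by gcongr)
  have hKψu : K ≤ K / k * ψ u := by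
    rw [div_mul_eq_mul_div, le_div_iff₀ hk]; gcongr; exact hlow u hu
  constructor
  · calc min c₀ (k / K) * ψ u ≤ k / K * K :=
        mul_le_mul (min_le_right _ _) (hup u hu hua.le) hψu.le (by positivity)
      _ = k := div_mul_cancel₀ k hK.ne'
      _ ≤ ψ (μ * u) := hlow _ hv
  rcases le_or_gt (μ * u) a with hva | hav
  · calc ψ (μ * u) ≤ K := hup _ hv hva
      _ ≤ K / k * ψ u := hKψu
      _ ≤ C * μ * ψ u := by gcongr; nlinarith
  · have hμa : 1 ≤ μ * u / a := by rw [le_div_iff₀ (by linarith)]; linarith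
    calc ψ (μ * u) = ψ (μ * u / a * a) := by rw [div_mul_cancel₀ _ (by linarith)]
      _ ≤ c₁ * (μ * u / a) * ψ a := (h a le_rfl _ hμa).2
      _ ≤ c₁ * μ * K := by
        gcongr
        · exact (hk.trans_le (hlow a ha)).le
        · rw [div_le_iff₀ (by linarith)]; nlinarith
        · exact hup a ha le_rfl
      _ ≤ c₁ * μ * (K / k * ψ u) := by gcongr
      _ = c₁ * (K / k) * μ * ψ u := by ring
      _ ≤ C * μ * ψ u := by rw [hC]; gcongr; exact le_max_left c₁ 1

theorem BClass.exists_pos_le {ψ : ℝ → ℝ} (hψ : BClass ψ) {r : ℝ} (hr : 0 < r) :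
    ∃ k > 0, ∀ t, r ≤ t → k ≤ ψ t := by
  obtain ⟨M, hM⟩ := hψ.2.2.2 r hr
  have hM₀ : 0 < M := (one_div_pos.2 (hψ.2.1 r hr)).trans_le (hM r le_rfl)
  refine ⟨1 / M, one_div_pos.2 hM₀, fun t ht => ?_⟩
  have hψt := hψ.2.1 t (hr.trans_le ht)
  rw [div_le_iff₀ hM₀, mul_comm, ← div_le_iff₀ hψt]
  exact hM t ht

theorem PseudoconcaveAtTop.exists_almostQuasiconcaveFrom {ψ : ℝ → ℝ} (h : PseudoconcaveAtTop ψ)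
    (hψ : ∀ t, 0 < t → 0 < ψ t) : ∃ a ≥ 1, AlmostQuasiconcaveFrom a ψ := by
  obtain ⟨r, hr, ψ₁, hψ₁, hconc, M, hM⟩ := h
  have hM₀ : 0 < M := (div_pos (hψ₁ (r + 1) (by linarith)) (hψ (r + 1) (by linarith))).trans_le
    (hM (r + 1) (by linarith)).2
  have hequiv : ∀ t, 2 * r + 1 ≤ t → ψ t ≤ M * ψ₁ t ∧ ψ₁ t ≤ M * ψ t := by
    intro t ht
    obtain ⟨h₁, h₂⟩ := hM t (by linarith)
    rw [div_le_iff₀ (hψ₁ t (by linarith))] at h₁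
    rw [div_le_iff₀ (hψ t (by linarith))] at h₂
    constructor <;> linarith
  refine ⟨2 * r + 1, by linarith, ?_⟩
  exact (hconc.almostQuasiconcaveFrom (fun t ht => (hψ₁ t ht).le) hr.le (by linarith)).of_le_mul
    (by linarith) hM₀ hequiv

theorem PseudoconcaveAtTop.almostQuasiconcaveFrom_one {ψ : ℝ → ℝ} (h : PseudoconcaveAtTop ψ)
    (hψ : BClass ψ) : AlmostQuasiconcaveFrom 1 ψ := by
  obtain ⟨a, ha, h⟩ := h.exists_almostQuasiconcaveFrom hψ.2.1
  obtain ⟨k, hk, hlow⟩ := hψ.exists_pos_le one_pos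
  obtain ⟨K, hK⟩ := hψ.2.2.1 1 (a + 1) one_pos (by linarith)
  exact h.extend ha hk hlow fun t ht hta => hK t ht (by linarith)

theorem concaveOn_ciInf {ι : Sort*} [Nonempty ι] {E : Type*} [AddCommMonoid E] [Module ℝ E]
    {s : Set E} {f : ι → E → ℝ} (hf : ∀ i, ConcaveOn ℝ s (f i))
    (hbdd : ∀ x ∈ s, BddBelow (range fun i => f i x)) : ConcaveOn ℝ s fun x => ⨅ i, f i x := by
  refine ⟨(hf (Classical.arbitrary ι)).1, fun x hx y hy a b ha hb hab => le_ciInf fun i => ?_⟩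
  calc a • (⨅ i, f i x) + b • (⨅ i, f i y) ≤ a • f i x + b • f i y := by
        gcongr
        · exact ciInf_le (hbdd x hx) i
        · exact ciInf_le (hbdd y hy) i
    _ ≤ f i (a • x + b • y) := (hf i).2 hx hy ha hb hab

noncomputable def concaveRegularization (a : ℝ) (ψ : ℝ → ℝ) (t : ℝ) : ℝ :=
  ⨅ s : Ici a, ψ s * (1 + t / s)

section concaveRegularization

variable {a : ℝ} {ψ : ℝ → ℝ}

theorem concaveRegularization_bddBelow (ha : 0 < a) (hψ : ∀ t, a ≤ t → 0 < ψ t) {t : ℝ}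
    (ht : 0 ≤ t) : BddBelow (range fun s : Ici a => ψ s * (1 + t / s)) := by
  refine ⟨0, ?_⟩
  rintro _ ⟨⟨s, hs⟩, rfl⟩
  have := hψ s hs
  have : 0 < s := ha.trans_le hs
  positivity

theorem concaveOn_concaveRegularization (ha : 0 < a) (hψ : ∀ t, a ≤ t → 0 < ψ t) :
    ConcaveOn ℝ (Ici 0) (concaveRegularization a ψ) := by
  have : Nonempty (Ici a) := ⟨⟨a, mem_Ici.2 le_rfl⟩⟩
  refine concaveOn_ciInf (fun s => ⟨convex_Ici 0, fun x _ y _ p q _ _ hpq => le_of_eq ?_⟩)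
    fun t ht => concaveRegularization_bddBelow ha hψ ht
  simp only [smul_eq_mul]
  linear_combination ψ s * hpq

theorem concaveRegularization_le_two_mul (ha : 0 < a) (hψ : ∀ t, a ≤ t → 0 < ψ t) {t : ℝ}
    (ht : a ≤ t) : concaveRegularization a ψ t ≤ 2 * ψ t := by
  have h := ciInf_le (concaveRegularization_bddBelow ha hψ (ha.trans_le ht).le) ⟨t, ht⟩
  rw [div_self (ha.trans_le ht).ne'] at h
  exact h.trans_eq (by ring)

theorem AlmostQuasiconcaveFrom.exists_mul_le_concaveRegularization
    (h : AlmostQuasiconcaveFrom a ψ) (ha : 0 < a) (hψ : ∀ t, a ≤ t → 0 < ψ t) :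
    ∃ m > 0, ∀ t, a ≤ t → m * ψ t ≤ concaveRegularization a ψ t := by
  obtain ⟨c₀, hc₀, c₁, hc₁, h⟩ := h
  refine ⟨min c₀ c₁⁻¹, by positivity, fun t ht => le_ciInf fun ⟨s, hs⟩ => ?_⟩
  have ht₀ : 0 < t := ha.trans_le ht
  have hs₀ : 0 < s := ha.trans_le hs
  have hψs := hψ s hs
  have hψt := hψ t ht
  rcases le_total t s with hts | hst
  · have h₁ := (h t ht (s / t) ((one_le_div ht₀).2 hts)).1
    rw [div_mul_cancel₀ _ ht₀.ne'] at h₁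
    calc min c₀ c₁⁻¹ * ψ t ≤ c₀ * ψ t := by gcongr; exact min_le_left _ _
      _ ≤ ψ s := h₁
      _ ≤ ψ s * (1 + t / s) :=
        le_mul_of_one_le_right hψs.le (le_add_of_nonneg_right (by positivity))
  · have h₁ := (h s hs (t / s) ((one_le_div hs₀).2 hst)).2
    rw [div_mul_cancel₀ _ hs₀.ne'] at h₁
    calc min c₀ c₁⁻¹ * ψ t ≤ c₁⁻¹ * ψ t := by gcongr; exact min_le_right _ _
      _ ≤ t / s * ψ s := by rw [inv_mul_le_iff₀ hc₁]; linarith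
      _ ≤ ψ s * (1 + t / s) := by linarith

end concaveRegularization

theorem AlmostQuasiconcaveFrom.pseudoconcaveAtTop {a : ℝ} {ψ : ℝ → ℝ}
    (h : AlmostQuasiconcaveFrom a ψ) (ha : 0 < a) (hψ : ∀ t, a ≤ t → 0 < ψ t) :
    PseudoconcaveAtTop ψ := by
  obtain ⟨m, hm, hmψ⟩ := h.exists_mul_le_concaveRegularization ha hψ
  have hpos : ∀ t, a < t → 0 < concaveRegularization a ψ t := fun t ht =>
    (mul_pos hm (hψ t ht.le)).trans_le (hmψ t ht.le)
  refine ⟨a, ha, concaveRegularization a ψ, hpos,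
    (concaveOn_concaveRegularization ha hψ).subset (fun t ht => mem_Ici.2 (ha.trans ht).le)
      (convex_Ioi a), max m⁻¹ 2, fun t ht => ⟨?_, ?_⟩⟩
  · rw [div_le_iff₀ (hpos t ht)]
    calc ψ t = m⁻¹ * (m * ψ t) := by field_simp
      _ ≤ max m⁻¹ 2 * concaveRegularization a ψ t :=
        mul_le_mul (le_max_left _ _) (hmψ t ht.le) (mul_pos hm (hψ t ht.le)).le (by positivity)
  · rw [div_le_iff₀ (hψ t ht.le)]
    exact (concaveRegularization_le_two_mul ha hψ ht.le).trans
      (mul_le_mul_of_nonneg_right (le_max_right _ _) (hψ t ht.le).le)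

theorem pseudoconcaveAtTop_iff_almostQuasiconcaveFrom_one {ψ : ℝ → ℝ} (hψ : BClass ψ) :
    PseudoconcaveAtTop ψ ↔ AlmostQuasiconcaveFrom 1 ψ :=
  ⟨fun h => h.almostQuasiconcaveFrom_one hψ,
    fun h => h.pseudoconcaveAtTop one_pos fun t ht => hψ.2.1 t (by linarith)⟩

theorem forall_one_le_iff_forall_one_le_rpow {σ : ℝ} (hσ : 0 < σ) {P : ℝ → Prop} :
    (∀ u, 1 ≤ u → P u) ↔ ∀ t, 1 ≤ t → P (t ^ σ) := by
  refine ⟨fun h t ht => h _ (Real.one_le_rpow ht hσ.le), fun h u hu => ?_⟩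
  simpa [Real.rpow_inv_rpow (by linarith : 0 ≤ u) hσ.ne'] using
    h (u ^ σ⁻¹) (Real.one_le_rpow hu (inv_nonneg.2 hσ.le))

theorem rpow_mul_div_bounds_iff {s₀ s₁ c₀ c₁ l T x y : ℝ} (hl : 0 < l) (hT : 0 < T)
    (hx : 0 < x) :
    (c₀ * l ^ s₀ ≤ l ^ s₀ * T * y / (T * x) ∧ l ^ s₀ * T * y / (T * x) ≤ c₁ * l ^ s₁) ↔
      (c₀ * x ≤ y ∧ y ≤ c₁ * l ^ (s₁ - s₀) * x) := by
  have hL : 0 < l ^ s₀ := Real.rpow_pos_of_pos hl s₀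
  have hratio : l ^ s₀ * T * y / (T * x) = l ^ s₀ * (y / x) := by field_simp
  have hs₁ : c₁ * l ^ s₁ = l ^ s₀ * (c₁ * l ^ (s₁ - s₀)) := by
    rw [mul_left_comm, ← Real.rpow_add hl, add_sub_cancel]
  rw [hratio, hs₁, mul_comm c₀, mul_le_mul_iff_right₀ hL, mul_le_mul_iff_right₀ hL,
    le_div_iff₀ hx, div_le_iff₀ hx]

/-- For `s₀ < s₁` and `ψ ∈ B`, setting `φ(t) = t^{s₀} ψ(t^{s₁-s₀})`, the function `ψ` is
pseudoconcave in a neighbourhood of infinity (i.e. an interpolation parameter) if and only if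
there exist `c₀, c₁ > 0` with `c₀ λ^{s₀} ≤ φ(λt)/φ(t) ≤ c₁ λ^{s₁}` for all `t ≥ 1`, `λ ≥ 1`. -/
theorem interpolation_parameter_iff_regularity (s₀ s₁ : ℝ) (hs : s₀ < s₁)
    (ψ : ℝ → ℝ) (hψ : BClass ψ) :
    PseudoconcaveAtTop ψ ↔
      ∃ c₀ > (0 : ℝ), ∃ c₁ > (0 : ℝ), ∀ t : ℝ, 1 ≤ t → ∀ l : ℝ, 1 ≤ l →
        c₀ * l ^ s₀ ≤ ((l * t) ^ s₀ * ψ ((l * t) ^ (s₁ - s₀))) / (t ^ s₀ * ψ (t ^ (s₁ - s₀))) ∧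
        ((l * t) ^ s₀ * ψ ((l * t) ^ (s₁ - s₀))) / (t ^ s₀ * ψ (t ^ (s₁ - s₀))) ≤ c₁ * l ^ s₁ := by
  have hσ : 0 < s₁ - s₀ := sub_pos.2 hs
  rw [pseudoconcaveAtTop_iff_almostQuasiconcaveFrom_one hψ]
  refine exists_congr fun c₀ => and_congr_right fun _ => exists_congr fun c₁ =>
    and_congr_right fun _ => ?_
  rw [forall_one_le_iff_forall_one_le_rpow hσ]
  refine forall₂_congr fun t ht => ?_
  rw [forall_one_le_iff_forall_one_le_rpow hσ]
  refine forall₂_congr fun l hl => ?_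
  have ht₀ : 0 < t := by linarith
  have hl₀ : 0 < l := by linarith
  rw [Real.mul_rpow hl₀.le ht₀.le, Real.mul_rpow hl₀.le ht₀.le,
    rpow_mul_div_bounds_iff hl₀ (Real.rpow_pos_of_pos ht₀ _)
      (hψ.2.1 _ (Real.rpow_pos_of_pos ht₀ _))]
end

section
/- Let φ ∈ OR, let r ≥ 0 be a real number, and assume that ∫₁^∞ τ^{r}/φ(τ)² dτ < ∞. Define η(t) := ∫ₜ^∞ τ^{r}/φ(τ)² dτ for t ≥ 1. Then η maps [1,∞) into (0,∞) and η belongs to the class OR. -/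
open MeasureTheory Filter Set

/-! The tail `η(lt)` is squeezed between `η(t)` and `c⁻² η(t)`: the upper bound because the
integrand is positive, the lower one by substituting `τ = l s` in `η(lt)` and using
`(ls)^r/φ(ls)² ≥ c⁻² s^r/φ(s)²`, which is where the OR property of `φ` enters. -/

theorem ORClass.of_le_of_le {η : ℝ → ℝ} (hm : Measurable η) (hpos : ∀ t, 1 ≤ t → 0 < η t)
    {a c : ℝ} (ha : 1 < a) (hc : 1 ≤ c)
    (hbound : ∀ t, 1 ≤ t → ∀ l, 1 ≤ l → l ≤ a → c⁻¹ * η t ≤ η (l * t) ∧ η (l * t) ≤ c * η t) :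
    ORClass η := by
  refine ⟨hm, hpos, a, ha, c, hc, fun t ht l hl hla => ?_⟩
  obtain ⟨hlow, hup⟩ := hbound t ht l hl hla
  exact ⟨(le_div_iff₀ (hpos t ht)).2 hlow, (div_le_iff₀ (hpos t ht)).2 hup⟩

section TailIntegral

variable {E : Type*} [NormedAddCommGroup E] [NormedSpace ℝ E]

theorem stronglyMeasurable_setIntegral_Ici {f : ℝ → E} (hf : StronglyMeasurable f) :
    StronglyMeasurable fun t => ∫ τ in Ici t, f τ := by
  have hind : StronglyMeasurable fun p : ℝ × ℝ => (Ici p.1).indicator f p.2 := by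
    have hset : MeasurableSet {p : ℝ × ℝ | p.1 ≤ p.2} :=
      measurableSet_le measurable_fst measurable_snd
    convert (hf.comp_measurable measurable_snd).indicator hset using 1
    ext p
    simp only [indicator_apply, mem_Ici, mem_ofPred_eq, Function.comp_apply]
  simp_rw [← integral_indicator measurableSet_Ici]
  exact hind.integral_prod_right' (ν := volume)

variable {f : ℝ → ℝ} {t : ℝ}

theorem setIntegral_Ici_pos (hf : IntegrableOn f (Ici t)) (hpos : ∀ τ ∈ Ici t, 0 < f τ) :
    0 < ∫ τ in Ici t, f τ := by
  have hnn : 0 ≤ᵐ[volume.restrict (Ici t)] f :=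
    (ae_restrict_iff' measurableSet_Ici).2 (Eventually.of_forall fun τ hτ => (hpos τ hτ).le)
  rw [setIntegral_pos_iff_support_of_nonneg_ae hnn hf]
  have hsub : Ici t ⊆ Function.support f ∩ Ici t := fun τ hτ => ⟨(hpos τ hτ).ne', hτ⟩
  refine lt_of_lt_of_le ?_ (measure_mono hsub)
  simp [Real.volume_Ici]

theorem setIntegral_Ici_mul_le (hf : IntegrableOn f (Ici t)) (hf0 : ∀ τ ∈ Ici t, 0 ≤ f τ)
    (ht : 0 ≤ t) {l : ℝ} (hl : 1 ≤ l) :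
    ∫ τ in Ici (l * t), f τ ≤ ∫ τ in Ici t, f τ :=
  setIntegral_mono_set hf ((ae_restrict_iff' measurableSet_Ici).2 (Eventually.of_forall hf0))
    (Ici_subset_Ici.2 (le_mul_of_one_le_left ht hl)).eventuallyLE

theorem mul_setIntegral_Ici_le_of_le_comp_mul (hf : IntegrableOn f (Ici t))
    (hf0 : ∀ τ ∈ Ici t, 0 ≤ f τ) (ht : 0 ≤ t) {l k : ℝ} (hl : 1 ≤ l) (hk : 0 ≤ k)
    (hkf : ∀ s ∈ Ioi t, k * f s ≤ f (l * s)) :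
    k * ∫ τ in Ici t, f τ ≤ ∫ τ in Ici (l * t), f τ := by
  have hl0 : 0 < l := zero_lt_one.trans_le hl
  have hcomp : IntegrableOn (fun s => f (l * s)) (Ioi t) :=
    (integrableOn_Ioi_comp_mul_left_iff f t hl0).2
      (hf.mono_set (Ioi_subset_Ici (le_mul_of_one_le_left ht hl)))
  have hcomp0 : 0 ≤ ∫ s in Ioi t, f (l * s) :=
    setIntegral_nonneg measurableSet_Ioi fun s hs =>
      (mul_nonneg hk (hf0 s (mem_Ici_of_Ioi hs))).trans (hkf s hs)
  calc k * ∫ τ in Ici t, f τ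
      = ∫ s in Ioi t, k * f s := by rw [integral_Ici_eq_integral_Ioi, integral_const_mul]
    _ ≤ ∫ s in Ioi t, f (l * s) :=
        setIntegral_mono_on ((hf.mono_set Ioi_subset_Ici_self).const_mul k) hcomp
          measurableSet_Ioi hkf
    _ ≤ l * ∫ s in Ioi t, f (l * s) := le_mul_of_one_le_left hcomp0 hl
    _ = ∫ τ in Ici (l * t), f τ := by
        rw [integral_Ici_eq_integral_Ioi, ← smul_eq_mul, integral_comp_mul_left_Ioi' f t hl0]

end TailIntegral

theorem inv_sq_mul_rpow_div_sq_le {φ : ℝ → ℝ} {r c l s : ℝ} (hr : 0 ≤ r) (hs : 0 < s)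
    (hl : 1 ≤ l) (hφls : 0 < φ (l * s)) (hle : φ (l * s) ≤ c * φ s) :
    (c ^ 2)⁻¹ * (s ^ r / φ s ^ 2) ≤ (l * s) ^ r / φ (l * s) ^ 2 := by
  have hsq : φ (l * s) ^ 2 ≤ c ^ 2 * φ s ^ 2 := by
    rw [← mul_pow]; exact pow_le_pow_left₀ hφls.le hle 2
  have hrpow : s ^ r ≤ (l * s) ^ r :=
    Real.rpow_le_rpow hs.le (le_mul_of_one_le_left hs.le hl) hr
  calc (c ^ 2)⁻¹ * (s ^ r / φ s ^ 2) = s ^ r / (c ^ 2 * φ s ^ 2) := by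
        rw [mul_div_assoc', inv_mul_eq_div, div_div]
    _ ≤ (l * s) ^ r / φ (l * s) ^ 2 :=
        div_le_div₀ (by positivity) hrpow (by positivity) hsq

/-- If `φ ∈ OR`, `r ≥ 0`, and `∫₁^∞ τ^r/φ(τ)² dτ < ∞`, then the function
`η(t) := ∫ₜ^∞ τ^r/φ(τ)² dτ` maps `[1,∞)` into `(0,∞)` and belongs to `OR`. -/
theorem or_of_tail_integral (φ : ℝ → ℝ) (hφ : ORClass φ) (r : ℝ) (hr : 0 ≤ r)
    (hint : IntegrableOn (fun τ : ℝ => τ ^ r / (φ τ) ^ 2) (Set.Ici (1 : ℝ))) :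
    (∀ t : ℝ, 1 ≤ t → 0 < ∫ τ in Set.Ici t, τ ^ r / (φ τ) ^ 2) ∧
      ORClass (fun t => ∫ τ in Set.Ici t, τ ^ r / (φ τ) ^ 2) := by
  obtain ⟨hφm, hφpos, a, ha, c, hc, hφOR⟩ := hφ
  have hfpos : ∀ τ : ℝ, 1 ≤ τ → 0 < τ ^ r / φ τ ^ 2 := fun τ hτ =>
    div_pos (Real.rpow_pos_of_pos (by linarith) r) (pow_pos (hφpos τ hτ) 2)
  have hint_t : ∀ t : ℝ, 1 ≤ t → IntegrableOn (fun τ : ℝ => τ ^ r / φ τ ^ 2) (Ici t) :=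
    fun t ht => hint.mono_set (Ici_subset_Ici.2 ht)
  have hη_pos : ∀ t : ℝ, 1 ≤ t → 0 < ∫ τ in Ici t, τ ^ r / φ τ ^ 2 := fun t ht =>
    setIntegral_Ici_pos (hint_t t ht) fun τ hτ => hfpos τ (ht.trans hτ)
  have hf_meas : Measurable fun τ : ℝ => τ ^ r / φ τ ^ 2 :=
    (Real.continuous_rpow_const hr).measurable.div (hφm.pow_const 2)
  have hη_meas : Measurable fun t : ℝ => ∫ τ in Ici t, τ ^ r / φ τ ^ 2 :=
    (stronglyMeasurable_setIntegral_Ici hf_meas.stronglyMeasurable).measurable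
  refine ⟨hη_pos, ORClass.of_le_of_le hη_meas hη_pos ha (one_le_pow₀ hc : 1 ≤ c ^ 2)
    fun t ht l hl hla => ⟨?lower, ?upper⟩⟩
  case lower =>
    refine mul_setIntegral_Ici_le_of_le_comp_mul (hint_t t ht)
      (fun τ hτ => (hfpos τ (ht.trans hτ)).le) (by linarith) hl (by positivity) fun s hs => ?_
    have hs1 : 1 ≤ s := ht.trans hs.le
    exact inv_sq_mul_rpow_div_sq_le hr (by linarith) hl
      (hφpos _ (hs1.trans (le_mul_of_one_le_left (by linarith) hl)))
      ((div_le_iff₀ (hφpos s hs1)).1 (hφOR s hs1 l hl hla).2)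
  case upper =>
    exact (setIntegral_Ici_mul_le (hint_t t ht) (fun τ hτ => (hfpos τ (ht.trans hτ)).le)
      (by linarith) hl).trans (le_mul_of_one_le_left (hη_pos t ht).le (one_le_pow₀ hc))
end

section
/- Let q ≥ 0 and n ≥ 1 be integers and let φ ∈ OR satisfy ∫₁^∞ t^{2q+n−1}/φ(t)² dt < ∞. Then there exist functions φ₁, φ₂ ∈ OR such that φ(t) = φ₁(t)·φ₂(t) for all t ≥ 1, φ₁(t) → ∞ as t → ∞, and ∫₁^∞ t^{2q+n−1}/φ₂(t)² dt < ∞. -/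
open MeasureTheory Filter Set

/-!
With `g t = t ^ m / φ t ^ 2` and the tail `R t = ∫_t^∞ g`, take `φ₁ = R ^ (-1/4)` and
`φ₂ = φ R ^ (1/4)`. Then `φ₁ → ∞` because `R → 0`, and `t ^ m / φ₂ ^ 2 = g / √R = -2 (√R)'`,
which is integrable on `[1, ∞)`. The OR property of `φ` gives `g t ≤ K g (a t)` for some `a > 1`,
hence `R t ≤ K R (a t)`; this makes the antitone function `R`, and so `φ₁` and `φ₂`,
OR-varying, and it replaces the derivative computation by the telescoping block estimate
`∫_u^{au} g / √R ≤ (R u - R (a u)) / √(R (a u)) ≤ (1 + √K) (√(R u) - √(R (a u)))`.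
-/

open Topology

namespace ORClass

variable {f g : ℝ → ℝ}

lemma mul (hf : ORClass f) (hg : ORClass g) : ORClass (fun t => f t * g t) := by
  obtain ⟨hf_meas, hf_pos, a, ha, c, hc, hf_ratio⟩ := hf
  obtain ⟨hg_meas, hg_pos, b, hb, d, hd, hg_ratio⟩ := hg
  refine ⟨hf_meas.mul hg_meas, fun t ht => mul_pos (hf_pos t ht) (hg_pos t ht),
    min a b, lt_min ha hb, c * d, one_le_mul_of_one_le_of_one_le hc hd,
    fun t ht l hl hlab => ?_⟩
  obtain ⟨hf_lo, hf_hi⟩ := hf_ratio t ht l hl (hlab.trans (min_le_left a b))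
  obtain ⟨hg_lo, hg_hi⟩ := hg_ratio t ht l hl (hlab.trans (min_le_right a b))
  rw [mul_div_mul_comm, mul_inv]
  exact ⟨mul_le_mul hf_lo hg_lo (by positivity) ((inv_pos.2 (by positivity)).le.trans hf_lo),
    mul_le_mul hf_hi hg_hi ((inv_pos.2 (by positivity)).le.trans hg_lo) (by positivity)⟩

lemma inv (hf : ORClass f) : ORClass (fun t => (f t)⁻¹) := by
  obtain ⟨hf_meas, hf_pos, a, ha, c, hc, hf_ratio⟩ := hf
  refine ⟨hf_meas.inv, fun t ht => inv_pos.2 (hf_pos t ht), a, ha, c, hc,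
    fun t ht l hl hla => ?_⟩
  have hc0 : 0 < c := zero_lt_one.trans_le hc
  obtain ⟨hlo, hhi⟩ := hf_ratio t ht l hl hla
  have hratio : 0 < f (l * t) / f t := (inv_pos.2 hc0).trans_le hlo
  rw [inv_div_inv, ← inv_div]
  exact ⟨(inv_le_inv₀ hc0 hratio).2 hhi, (inv_le_comm₀ hratio hc0).2 hlo⟩

lemma rpow (hf : ORClass f) {r : ℝ} (hr : 0 ≤ r) : ORClass (fun t => f t ^ r) := by
  obtain ⟨hf_meas, hf_pos, a, ha, c, hc, hf_ratio⟩ := hf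
  refine ⟨hf_meas.pow_const r, fun t ht => Real.rpow_pos_of_pos (hf_pos t ht) r, a, ha,
    c ^ r, Real.one_le_rpow hc hr, fun t ht l hl hla => ?_⟩
  have hc0 : 0 < c := zero_lt_one.trans_le hc
  obtain ⟨hlo, hhi⟩ := hf_ratio t ht l hl hla
  rw [← Real.div_rpow (hf_pos _ (one_le_mul_of_one_le_of_one_le hl ht)).le (hf_pos t ht).le,
    ← Real.inv_rpow hc0.le]
  exact ⟨Real.rpow_le_rpow (inv_pos.2 hc0).le hlo hr,
    Real.rpow_le_rpow ((inv_pos.2 hc0).le.trans hlo) hhi hr⟩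

lemma of_antitone (hf : Antitone f) (hf_pos : ∀ t, 1 ≤ t → 0 < f t) {a C : ℝ} (ha : 1 < a)
    (hC : ∀ t, 1 ≤ t → f t ≤ C * f (a * t)) : ORClass f := by
  refine ⟨hf.measurable, hf_pos, a, ha, max C 1, le_max_right C 1, fun t ht l hl hla => ?_⟩
  have hlt : t ≤ l * t := le_mul_of_one_le_left (zero_le_one.trans ht) hl
  have hat : l * t ≤ a * t := mul_le_mul_of_nonneg_right hla (zero_le_one.trans ht)
  have hft := hf_pos t ht
  have hfat := hf_pos (a * t) (ht.trans (hlt.trans hat))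
  constructor
  · rw [le_div_iff₀ hft, inv_mul_le_iff₀ (zero_lt_one.trans_le (le_max_right C 1))]
    calc f t ≤ C * f (a * t) := hC t ht
      _ ≤ max C 1 * f (a * t) := mul_le_mul_of_nonneg_right (le_max_left C 1) hfat.le
      _ ≤ max C 1 * f (l * t) :=
        mul_le_mul_of_nonneg_left (hf hat) (zero_le_one.trans (le_max_right C 1))
  · rw [div_le_iff₀ hft]
    exact (hf hlt).trans (le_mul_of_one_le_left hft.le (le_max_right C 1))

lemma exists_pow_div_sq_le (hf : ORClass f) (m : ℕ) :
    ∃ a > 1, ∃ K, ∀ t, 1 ≤ t → t ^ m / f t ^ 2 ≤ K * ((a * t) ^ m / f (a * t) ^ 2) := by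
  obtain ⟨-, hf_pos, a, ha, c, hc, hf_ratio⟩ := hf
  refine ⟨a, ha, c ^ 2, fun t ht => ?_⟩
  have hft := hf_pos t ht
  have hfat := hf_pos (a * t) (one_le_mul_of_one_le_of_one_le ha.le ht)
  have hfat_le : f (a * t) ≤ c * f t := (div_le_iff₀ hft).1 (hf_ratio t ht a ha.le le_rfl).2
  calc t ^ m / f t ^ 2 ≤ (a * t) ^ m / f t ^ 2 := by
        gcongr
        exact le_mul_of_one_le_left (by linarith) ha.le
    _ = c ^ 2 * ((a * t) ^ m / (c * f t) ^ 2) := by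
        field_simp [(zero_lt_one.trans_le hc).ne']
    _ ≤ c ^ 2 * ((a * t) ^ m / f (a * t) ^ 2) := by
        gcongr

end ORClass

-- Truncating at `1` makes the tail positive and antitone on all of `ℝ`, hence measurable.
noncomputable def tailIntegral (g : ℝ → ℝ) (t : ℝ) : ℝ := ∫ s in Ioi (max t 1), g s

section tailIntegral

variable {g : ℝ → ℝ}

lemma tailIntegral_of_one_le {t : ℝ} (ht : 1 ≤ t) : tailIntegral g t = ∫ s in Ioi t, g s := by
  rw [tailIntegral, max_eq_left ht]

lemma tendsto_tailIntegral_atTop : Tendsto (tailIntegral g) atTop (𝓝 0) :=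
  tendsto_integral_Ioi_zero (tendsto_atTop_mono (le_max_left · 1) tendsto_id)

variable (hg_int : IntegrableOn g (Ioi 1))
include hg_int

lemma tailIntegral_sub {u v : ℝ} (hu : 1 ≤ u) (huv : u ≤ v) :
    tailIntegral g u - tailIntegral g v = ∫ s in u..v, g s := by
  rw [tailIntegral_of_one_le hu, tailIntegral_of_one_le (hu.trans huv),
    ← intervalIntegral.integral_interval_add_Ioi (hg_int.mono_set (Ioi_subset_Ioi hu))
      (hg_int.mono_set (Ioi_subset_Ioi (hu.trans huv))), add_sub_cancel_right]

variable (hg_pos : ∀ t, 1 ≤ t → 0 < g t)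
include hg_pos

lemma tailIntegral_pos (t : ℝ) : 0 < tailIntegral g t := by
  have h1 : 1 ≤ max t 1 := le_max_right t 1
  rw [tailIntegral, setIntegral_pos_iff_support_of_nonneg_ae
    (ae_restrict_of_forall_mem measurableSet_Ioi fun s hs => (hg_pos s (h1.trans hs.le)).le)
    (hg_int.mono_set (Ioi_subset_Ioi h1))]
  refine lt_of_lt_of_le ?_ (measure_mono (fun s hs => ⟨(hg_pos s (h1.trans hs.le)).ne', hs⟩ :
    Ioi (max t 1) ⊆ Function.support g ∩ Ioi (max t 1)))
  simp

lemma tailIntegral_antitone : Antitone (tailIntegral g) := fun s _ hst =>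
  setIntegral_mono_set (hg_int.mono_set (Ioi_subset_Ioi (le_max_right s 1)))
    (ae_restrict_of_forall_mem measurableSet_Ioi fun x hx =>
      (hg_pos x ((le_max_right s 1).trans hx.le)).le)
    (Ioi_subset_Ioi (max_le_max_right 1 hst)).eventuallyLE

lemma tailIntegral_le_mul_comp_mul {a K : ℝ} (ha : 1 < a)
    (hK : ∀ t, 1 ≤ t → g t ≤ K * g (a * t)) {t : ℝ} (ht : 1 ≤ t) :
    tailIntegral g t ≤ K * tailIntegral g (a * t) := by
  have ha0 : 0 < a := zero_lt_one.trans ha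
  have hat : 1 ≤ a * t := one_le_mul_of_one_le_of_one_le ha.le ht
  have hcomp : IntegrableOn (fun s => g (a * s)) (Ioi t) :=
    (integrableOn_Ioi_comp_mul_left_iff g t ha0).2 (hg_int.mono_set (Ioi_subset_Ioi hat))
  have hle : tailIntegral g t ≤ a⁻¹ * (K * tailIntegral g (a * t)) := by
    calc tailIntegral g t = ∫ s in Ioi t, g s := tailIntegral_of_one_le ht
      _ ≤ ∫ s in Ioi t, K * g (a * s) :=
        setIntegral_mono_on (hg_int.mono_set (Ioi_subset_Ioi ht)) (hcomp.const_mul K)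
          measurableSet_Ioi fun s hs => hK s (ht.trans hs.le)
      _ = a⁻¹ * (K * tailIntegral g (a * t)) := by
        rw [integral_const_mul, integral_comp_mul_left_Ioi g t ha0, smul_eq_mul,
          tailIntegral_of_one_le hat]
        ring
  have hpos := tailIntegral_pos hg_int hg_pos t
  have hKR : 0 < K * tailIntegral g (a * t) := by
    by_contra! h
    nlinarith [inv_pos.2 ha0]
  calc tailIntegral g t ≤ a⁻¹ * (K * tailIntegral g (a * t)) := hle
    _ ≤ K * tailIntegral g (a * t) :=
      mul_le_of_le_one_left hKR.le (inv_le_one_of_one_le₀ ha.le)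

end tailIntegral

lemma integrableOn_Ioi_one_of_intervalIntegral_le_sub {f S : ℝ → ℝ} {a : ℝ} (ha : 1 < a)
    (hf : ∀ t, 1 ≤ t → 0 ≤ f t) (hS : ∀ t, 1 ≤ t → 0 ≤ S t)
    (hf_int : ∀ u, 1 ≤ u → IntegrableOn f (Ioc u (a * u)))
    (hf_le : ∀ u, 1 ≤ u → ∫ t in u..a * u, f t ≤ S u - S (a * u)) :
    IntegrableOn f (Ioi 1) := by
  have hpow : ∀ N : ℕ, 1 ≤ a ^ N := fun N => one_le_pow₀ ha.le
  have hpartial : ∀ N : ℕ, IntervalIntegrable f volume 1 (a ^ N) ∧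
      ∫ t in 1..a ^ N, f t ≤ S 1 - S (a ^ N) := by
    intro N
    induction N with
    | zero => simp
    | succ N ih =>
      have hstep : a ^ N ≤ a * a ^ N := le_mul_of_one_le_left (by linarith [hpow N]) ha.le
      have hpiece : IntervalIntegrable f volume (a ^ N) (a ^ (N + 1)) := by
        rw [pow_succ', intervalIntegrable_iff_integrableOn_Ioc_of_le hstep]
        exact hf_int _ (hpow N)
      refine ⟨ih.1.trans hpiece, ?_⟩
      rw [← intervalIntegral.integral_add_adjacent_intervals ih.1 hpiece, pow_succ']
      linarith [ih.2, hf_le _ (hpow N)]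
  refine integrableOn_Ioi_of_intervalIntegral_norm_bounded (S 1) 1
    (fun N => (intervalIntegrable_iff_integrableOn_Ioc_of_le (hpow N)).1 (hpartial N).1)
    (tendsto_pow_atTop_atTop_of_one_lt ha) (Eventually.of_forall fun N => ?_)
  have hnorm : ∫ t in 1..a ^ N, ‖f t‖ = ∫ t in 1..a ^ N, f t :=
    intervalIntegral.integral_congr fun t ht =>
      Real.norm_of_nonneg (hf t (by rw [uIcc_of_le (hpow N)] at ht; exact ht.1))
  linarith [(hpartial N).2, hS _ (hpow N)]

lemma sub_div_sqrt_le {A B K : ℝ} (hB : 0 < B) (hBA : B ≤ A) (hAK : A ≤ K * B) :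
    (A - B) / √B ≤ (1 + √K) * (√A - √B) := by
  have hsB : 0 < √B := Real.sqrt_pos.2 hB
  have hsA : √A ≤ √K * √B := by
    rw [← Real.sqrt_mul' K hB.le]
    exact Real.sqrt_le_sqrt hAK
  have hdiff : 0 ≤ √A - √B := sub_nonneg.2 (Real.sqrt_le_sqrt hBA)
  rw [div_le_iff₀ hsB]
  calc A - B = (√A - √B) * (√A + √B) := by
        linear_combination Real.sq_sqrt hB.le - Real.sq_sqrt (hB.le.trans hBA)
    _ ≤ (√A - √B) * (√K * √B + √B) := by gcongr
    _ = (1 + √K) * (√A - √B) * √B := by ring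

lemma integrableOn_div_sqrt_tailIntegral {g : ℝ → ℝ} (hg_int : IntegrableOn g (Ioi 1))
    (hg_pos : ∀ t, 1 ≤ t → 0 < g t) {a K : ℝ} (ha : 1 < a)
    (hK : ∀ t, 1 ≤ t → tailIntegral g t ≤ K * tailIntegral g (a * t)) :
    IntegrableOn (fun t => g t / √(tailIntegral g t)) (Ioi 1) := by
  set R := tailIntegral g
  have hR_pos : ∀ t, 0 < R t := tailIntegral_pos hg_int hg_pos
  have hR_anti : Antitone R := tailIntegral_antitone hg_int hg_pos
  have hle_at_end : ∀ u v t, 1 ≤ u → t ∈ Ioc u v → g t / √(R t) ≤ g t / √(R v) :=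
    fun u v t hu ht => div_le_div_of_nonneg_left (hg_pos t (hu.trans ht.1.le)).le
      (Real.sqrt_pos.2 (hR_pos v)) (Real.sqrt_le_sqrt (hR_anti ht.2))
  have hg_Ioc : ∀ u v, 1 ≤ u → IntegrableOn g (Ioc u v) :=
    fun u v hu => hg_int.mono_set fun t ht => hu.trans_lt ht.1
  have hf_int : ∀ u, 1 ≤ u → IntegrableOn (fun t => g t / √(R t)) (Ioc u (a * u)) := by
    intro u hu
    refine ((hg_Ioc u (a * u) hu).div_const (√(R (a * u)))).mono'
      ((hg_Ioc u (a * u) hu).aestronglyMeasurable.aemeasurable.div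
        hR_anti.measurable.sqrt.aemeasurable).aestronglyMeasurable
      (ae_restrict_of_forall_mem measurableSet_Ioc fun t ht => ?_)
    rw [Real.norm_of_nonneg (div_nonneg (hg_pos t (hu.trans ht.1.le)).le (Real.sqrt_nonneg _))]
    exact hle_at_end u (a * u) t hu ht
  refine integrableOn_Ioi_one_of_intervalIntegral_le_sub (S := fun t => (1 + √K) * √(R t)) ha
    (fun t ht => div_nonneg (hg_pos t ht).le (Real.sqrt_nonneg _))
    (fun t _ => mul_nonneg (add_nonneg zero_le_one (Real.sqrt_nonneg K)) (Real.sqrt_nonneg _))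
    hf_int fun u hu => ?_
  have hua : u ≤ a * u := le_mul_of_one_le_left (by linarith) ha.le
  calc ∫ t in u..a * u, g t / √(R t) ≤ ∫ t in u..a * u, g t / √(R (a * u)) :=
        intervalIntegral.integral_mono_on_of_le_Ioo hua
          ((intervalIntegrable_iff_integrableOn_Ioc_of_le hua).2 (hf_int u hu))
          ((intervalIntegrable_iff_integrableOn_Ioc_of_le hua).2
            ((hg_Ioc u (a * u) hu).div_const _))
          fun t ht => hle_at_end u (a * u) t hu (Ioo_subset_Ioc_self ht)
    _ = (R u - R (a * u)) / √(R (a * u)) := by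
        rw [intervalIntegral.integral_div, tailIntegral_sub hg_int hu hua]
    _ ≤ (1 + √K) * √(R u) - (1 + √K) * √(R (a * u)) := by
        rw [← mul_sub]
        exact sub_div_sqrt_le (hR_pos _) (hR_anti hua) (hK u hu)

theorem or_factorization_general (φ : ℝ → ℝ) (hφ : ORClass φ) (q n : ℕ)
    (hint : IntegrableOn (fun t : ℝ => t ^ (2 * q + n - 1) / (φ t) ^ 2) (Set.Ici (1 : ℝ))) :
    ∃ φ₁ φ₂ : ℝ → ℝ, ORClass φ₁ ∧ ORClass φ₂ ∧
      (∀ t : ℝ, 1 ≤ t → φ t = φ₁ t * φ₂ t) ∧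
      Tendsto φ₁ atTop atTop ∧
      IntegrableOn (fun t : ℝ => t ^ (2 * q + n - 1) / (φ₂ t) ^ 2) (Set.Ici (1 : ℝ)) := by
  set g : ℝ → ℝ := fun t => t ^ (2 * q + n - 1) / φ t ^ 2
  have hg_pos : ∀ t, 1 ≤ t → 0 < g t := fun t ht => by have := hφ.2.1 t ht; positivity
  have hg_int : IntegrableOn g (Ioi 1) := hint.mono_set Ioi_subset_Ici_self
  obtain ⟨a, ha, K, hg_le⟩ := hφ.exists_pow_div_sq_le (2 * q + n - 1)
  set R := tailIntegral g
  have hR_le : ∀ t, 1 ≤ t → R t ≤ K * R (a * t) :=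
    fun t => tailIntegral_le_mul_comp_mul hg_int hg_pos ha hg_le
  have hR_pos : ∀ t, 0 < R t := tailIntegral_pos hg_int hg_pos
  have hs : ORClass fun t => R t ^ (1 / 4 : ℝ) :=
    (ORClass.of_antitone (tailIntegral_antitone hg_int hg_pos) (fun t _ => hR_pos t) ha
      hR_le).rpow (by norm_num)
  refine ⟨fun t => (R t ^ (1 / 4 : ℝ))⁻¹, fun t => φ t * R t ^ (1 / 4 : ℝ), hs.inv, hφ.mul hs,
    fun t _ => ?_, ?_, ?_⟩
  · field_simp [(Real.rpow_pos_of_pos (hR_pos t) _).ne']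
  · have h := (tendsto_tailIntegral_atTop (g := g)).rpow_const (p := 1 / 4) (by norm_num)
    rw [Real.zero_rpow (by norm_num)] at h
    exact tendsto_inv_nhdsGT_zero.comp (tendsto_nhdsWithin_iff.2
      ⟨h, Eventually.of_forall fun t => Real.rpow_pos_of_pos (hR_pos t) _⟩)
  · rw [integrableOn_Ici_iff_integrableOn_Ioi]
    refine (integrableOn_div_sqrt_tailIntegral hg_int hg_pos ha hR_le).congr_fun
      (fun t _ => ?_) measurableSet_Ioi
    have hsq : (R t ^ (1 / 4 : ℝ)) ^ 2 = √(R t) := by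
      rw [← Real.rpow_natCast, ← Real.rpow_mul (hR_pos t).le, Real.sqrt_eq_rpow]
      norm_num
    simp only [mul_pow, hsq, div_div, g, R]

/-- If `φ ∈ OR` satisfies `∫₁^∞ t^{2q+n-1}/φ(t)² dt < ∞` (with integers `q ≥ 0`, `n ≥ 1`),
then `φ = φ₁ · φ₂` on `[1,∞)` for some `φ₁, φ₂ ∈ OR` with `φ₁(t) → ∞` as `t → ∞` and
`∫₁^∞ t^{2q+n-1}/φ₂(t)² dt < ∞`. -/
theorem or_factorization (φ : ℝ → ℝ) (hφ : ORClass φ) (q n : ℕ) (hn : 1 ≤ n)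
    (hint : IntegrableOn (fun t : ℝ => t ^ (2 * q + n - 1) / (φ t) ^ 2) (Set.Ici (1 : ℝ))) :
    ∃ φ₁ φ₂ : ℝ → ℝ, ORClass φ₁ ∧ ORClass φ₂ ∧
      (∀ t : ℝ, 1 ≤ t → φ t = φ₁ t * φ₂ t) ∧
      Tendsto φ₁ atTop atTop ∧
      IntegrableOn (fun t : ℝ => t ^ (2 * q + n - 1) / (φ₂ t) ^ 2) (Set.Ici (1 : ℝ)) :=
  or_factorization_general φ hφ q n hint
end

section
/- Let (X, μ) be a measure space, κ > 0, and let g : X → ℝ be measurable with g(x) ≥ κ for μ-almost every x. Let ψ : (0,∞) → (0,∞) be Borel measurable and let c > 0 satisfy ψ(t)/ψ(τ) ≤ c·max{1, t/τ} for all t, τ ≥ κ. Let u ∈ L²(μ;ℂ) be such that g·u ∈ L²(μ;ℂ). Then for every τ ≥ κ the function (ψ∘g)·u belongs to L²(μ;ℂ) and ‖(ψ∘g)·u‖₂ ≤ c·ψ(τ)·(‖u‖₂² + τ⁻²·‖g·u‖₂²)^{1/2}. -/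
/-!
Pointwise, `ψ(g) ≤ c ψ(τ) max{1, g/τ}` and `max{1, r}² ≤ 1 + r²`, so
`|ψ(g) u| ≤ c ψ(τ) (|u|² + τ⁻² |g u|²)^{1/2}` almost everywhere. The right-hand side lies in
`L²`, and integrating its square gives exactly `c² ψ(τ)² (‖u‖₂² + τ⁻² ‖g u‖₂²)`.
-/

open MeasureTheory

lemma max_one_mul_le_sqrt (a r : ℝ) :
    max 1 r * a ≤ √(a ^ 2 + (r * a) ^ 2) := by
  apply Real.le_sqrt_of_sq_le
  rcases le_total r 1 with hr | hr
  · rw [max_eq_left hr]; nlinarith [sq_nonneg (r * a)]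
  · rw [max_eq_right hr]; nlinarith [sq_nonneg a]

lemma norm_smul_le_mul_sqrt {E : Type*} [NormedAddCommGroup E] [NormedSpace ℝ E]
    {a b c t τ : ℝ} (ha : 0 ≤ a) (hb : 0 < b) (hc : 0 ≤ c)
    (hab : a / b ≤ c * max 1 (t / τ)) (z : E) :
    ‖a • z‖ ≤ c * b * √(‖z‖ ^ 2 + 1 / τ ^ 2 * ‖t • z‖ ^ 2) := by
  have hsq : 1 / τ ^ 2 * ‖t • z‖ ^ 2 = (t / τ * ‖z‖) ^ 2 := by
    rw [norm_smul, Real.norm_eq_abs, mul_pow, sq_abs]; ring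
  calc ‖a • z‖ = a * ‖z‖ := by rw [norm_smul, Real.norm_of_nonneg ha]
    _ ≤ c * max 1 (t / τ) * b * ‖z‖ := by
        gcongr; exact (div_le_iff₀ hb).1 hab
    _ = c * b * (max 1 (t / τ) * ‖z‖) := by ring
    _ ≤ c * b * √(‖z‖ ^ 2 + 1 / τ ^ 2 * ‖t • z‖ ^ 2) := by
        rw [hsq]; gcongr; exact max_one_mul_le_sqrt _ _

namespace MeasureTheory

variable {α : Type*} [MeasurableSpace α] {μ : Measure α}

lemma sq_toReal_eLpNorm_two {E : Type*} [NormedAddCommGroup E] {f : α → E}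
    (hf : AEStronglyMeasurable f μ) :
    (eLpNorm f 2 μ).toReal ^ 2 = ∫ x, ‖f x‖ ^ 2 ∂μ := by
  rw [toReal_eLpNorm hf, lpNorm_eq_integral_norm_rpow_toReal two_ne_zero ENNReal.ofNat_ne_top hf]
  simp only [ENNReal.toReal_ofNat, Real.rpow_two]
  exact_mod_cast Real.rpow_inv_natCast_pow (integral_nonneg fun x => by positivity) two_ne_zero

lemma memLp_two_sqrt {A : α → ℝ} (hA : Integrable A μ) (h0 : ∀ x, 0 ≤ A x) :
    MemLp (fun x => √(A x)) 2 μ := by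
  have hmeas : AEStronglyMeasurable (fun x => √(A x)) μ :=
    Real.continuous_sqrt.comp_aestronglyMeasurable hA.aestronglyMeasurable
  rw [memLp_two_iff_integrable_sq hmeas]
  simpa only [Real.sq_sqrt (h0 _)] using hA

lemma toReal_eLpNorm_two_sqrt {A : α → ℝ} (hA : AEStronglyMeasurable A μ) (h0 : ∀ x, 0 ≤ A x) :
    (eLpNorm (fun x => √(A x)) 2 μ).toReal = √(∫ x, A x ∂μ) := by
  rw [eq_comm, Real.sqrt_eq_iff_eq_sq (integral_nonneg h0) ENNReal.toReal_nonneg,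
    sq_toReal_eLpNorm_two (Real.continuous_sqrt.comp_aestronglyMeasurable hA)]
  simp only [Real.norm_of_nonneg (Real.sqrt_nonneg _), Real.sq_sqrt (h0 _)]

lemma MemLp.toReal_eLpNorm_le_mul {E F : Type*} [NormedAddCommGroup E] [NormedAddCommGroup F]
    {p : ENNReal} {f : α → E} {h : α → F} {C : ℝ} (hh : MemLp h p μ) (hC : 0 ≤ C) (hfh : ∀ᵐ x ∂μ, ‖f x‖ ≤ C * ‖h x‖) :
    (eLpNorm f p μ).toReal ≤ C * (eLpNorm h p μ).toReal := by
  have hle := ENNReal.toReal_mono (by finiteness) (eLpNorm_le_mul_eLpNorm_of_ae_le_mul hfh p)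
  rwa [ENNReal.toReal_mul, ENNReal.toReal_ofReal hC] at hle

end MeasureTheory

/-- Interpolational inequality (Theorem 3.1) realized for the multiplication operator by `g`
on `L²(μ)`: if `g ≥ κ > 0` a.e., `ψ : (0,∞) → (0,∞)` is Borel measurable, `c > 0` satisfies
`ψ(t)/ψ(τ) ≤ c·max{1, t/τ}` for all `t, τ ≥ κ`, and `u, g·u ∈ L²(μ;ℂ)`, then for every
`τ ≥ κ` one has `(ψ∘g)·u ∈ L²` and
`‖(ψ∘g)·u‖₂ ≤ c·ψ(τ)·(‖u‖₂² + τ⁻²·‖g·u‖₂²)^{1/2}`. -/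
theorem interpolational_inequality {X : Type*} [MeasurableSpace X] (μ : Measure X)
    (κ : ℝ) (hκ : 0 < κ) (g : X → ℝ) (hgm : Measurable g) (hgκ : ∀ᵐ x ∂μ, κ ≤ g x)
    (ψ : ℝ → ℝ) (hψm : Measurable ψ) (hψpos : ∀ t : ℝ, 0 < t → 0 < ψ t)
    (c : ℝ) (hc : 0 < c)
    (hineq : ∀ t : ℝ, κ ≤ t → ∀ τ : ℝ, κ ≤ τ → ψ t / ψ τ ≤ c * max 1 (t / τ))
    (u : X → ℂ) (hu : MemLp u 2 μ) (hgu : MemLp (fun x => g x • u x) 2 μ) :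
    ∀ τ : ℝ, κ ≤ τ →
      MemLp (fun x => ψ (g x) • u x) 2 μ ∧
      (eLpNorm (fun x => ψ (g x) • u x) 2 μ).toReal ≤
        c * ψ τ * Real.sqrt ((eLpNorm u 2 μ).toReal ^ 2 +
          (1 / τ ^ 2) * (eLpNorm (fun x => g x • u x) 2 μ).toReal ^ 2) := by
  intro τ hτ
  have hψτ : 0 < ψ τ := hψpos τ (hκ.trans_le hτ)
  set A : X → ℝ := fun x => ‖u x‖ ^ 2 + 1 / τ ^ 2 * ‖g x • u x‖ ^ 2
  have hu2 : Integrable (fun x => ‖u x‖ ^ 2) μ := hu.norm.integrable_sq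
  have hgu2 : Integrable (fun x => ‖g x • u x‖ ^ 2) μ := hgu.norm.integrable_sq
  have hA : Integrable A μ := hu2.add (hgu2.const_mul _)
  have hA0 : ∀ x, 0 ≤ A x := fun x => by positivity
  have hsqrtA : MemLp (fun x => √(A x)) 2 μ := memLp_two_sqrt hA hA0
  have hbound : ∀ᵐ x ∂μ, ‖ψ (g x) • u x‖ ≤ c * ψ τ * ‖√(A x)‖ := by
    filter_upwards [hgκ] with x hx
    rw [Real.norm_of_nonneg (Real.sqrt_nonneg _)]
    exact norm_smul_le_mul_sqrt (hψpos _ (hκ.trans_le hx)).le hψτ hc.le (hineq _ hx τ hτ) _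
  have hmeas : AEStronglyMeasurable (fun x => ψ (g x) • u x) μ :=
    (hψm.comp hgm).aestronglyMeasurable.smul hu.1
  refine ⟨hsqrtA.of_le_mul hmeas hbound, ?_⟩
  calc _ ≤ c * ψ τ * (eLpNorm (fun x => √(A x)) 2 μ).toReal :=
        hsqrtA.toReal_eLpNorm_le_mul (by positivity) hbound
    _ = c * ψ τ * √(∫ x, A x ∂μ) := by
        rw [toReal_eLpNorm_two_sqrt hA.aestronglyMeasurable hA0]
    _ = _ := by
        rw [integral_add hu2 (hgu2.const_mul _), integral_const_mul,
          sq_toReal_eLpNorm_two hu.1, sq_toReal_eLpNorm_two hgu.1]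
end

section
/- Let (X, μ) be a measure space, κ > 0, and let g : X → ℝ be measurable with g(x) ≥ κ for μ-almost every x. Let ψ : (0,∞) → (0,∞) be Borel measurable and let c > 0 satisfy ψ(t)/ψ(τ) ≤ c·max{1, t/τ} for all t, τ ≥ κ. Let u ∈ L²(μ;ℂ) be nonzero and such that g·u ∈ L²(μ;ℂ). Then (ψ∘g)·u ∈ L²(μ;ℂ) and ‖(ψ∘g)·u‖₂ ≤ c·√2·‖u‖₂·ψ(‖g·u‖₂/‖u‖₂). -/
/-!
Put `τ = ‖g u‖₂ / ‖u‖₂`, so that `κ ≤ τ` because `κ ≤ g`, and `K = c ψ(τ)`. Since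
`max {1, s}² ≤ 1 + s²`, the hypothesis on `ψ` gives pointwise `ψ(g)² ≤ K² (1 + g² / τ²)`.
Multiplying by `|u|²` and integrating,
`‖ψ(g) u‖₂² ≤ K² ‖u‖₂² + (K / τ)² ‖g u‖₂² = 2 K² ‖u‖₂²`.
-/

open MeasureTheory
open scoped ENNReal

theorem sq_max_one_le_one_add_sq (s : ℝ) : max 1 s ^ 2 ≤ 1 + s ^ 2 := by
  rcases le_total 1 s with h | h
  · rw [max_eq_right h]; linarith [sq_nonneg s]
  · rw [max_eq_left h]; nlinarith [sq_nonneg s]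

theorem norm_smul_sq_le_of_div_le_mul_max_one {E : Type*} [NormedAddCommGroup E]
    [NormedSpace ℝ E] {a b c t τ : ℝ} (z : E) (ha : 0 ≤ a) (hb : 0 < b)
    (h : a / b ≤ c * max 1 (t / τ)) :
    ‖a • z‖ ^ 2 ≤ (c * b) ^ 2 * ‖z‖ ^ 2 + (c * b / τ) ^ 2 * ‖t • z‖ ^ 2 := by
  have hab : a ≤ c * b * max 1 (t / τ) := by
    rw [div_le_iff₀ hb] at h
    linarith
  have ha2 : a ^ 2 ≤ (c * b) ^ 2 * (1 + (t / τ) ^ 2) :=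
    calc a ^ 2 ≤ (c * b * max 1 (t / τ)) ^ 2 := pow_le_pow_left₀ ha hab 2
      _ = (c * b) ^ 2 * max 1 (t / τ) ^ 2 := mul_pow _ _ 2
      _ ≤ (c * b) ^ 2 * (1 + (t / τ) ^ 2) := by gcongr; exact sq_max_one_le_one_add_sq _
  simp only [norm_smul, mul_pow, Real.norm_eq_abs, sq_abs]
  calc a ^ 2 * ‖z‖ ^ 2 ≤ (c * b) ^ 2 * (1 + (t / τ) ^ 2) * ‖z‖ ^ 2 := by gcongr
    _ = _ := by ring

namespace MeasureTheory

variable {α E F G : Type*} [MeasurableSpace α] {μ : Measure α}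
  [NormedAddCommGroup E] [NormedAddCommGroup F] [NormedAddCommGroup G]

theorem MemLp.toReal_eLpNorm_two_sq {f : α → E} (hf : MemLp f 2 μ) :
    (eLpNorm f 2 μ).toReal ^ 2 = ∫ x, ‖f x‖ ^ 2 ∂μ := by
  rw [toReal_eLpNorm hf.1,
    lpNorm_eq_integral_norm_rpow_toReal two_ne_zero ENNReal.ofNat_ne_top hf.1]
  simp only [ENNReal.toReal_ofNat, Real.rpow_two]
  exact_mod_cast Real.rpow_inv_natCast_pow (integral_nonneg fun x => sq_nonneg ‖f x‖) two_ne_zero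

theorem mul_toReal_eLpNorm_le_of_ae_mul_norm_le {p : ℝ≥0∞} {f : α → E} {g : α → F} {κ : ℝ}
    (hκ : 0 < κ) (h : ∀ᵐ x ∂μ, κ * ‖f x‖ ≤ ‖g x‖) (hg : eLpNorm g p μ ≠ ⊤) :
    κ * (eLpNorm f p μ).toReal ≤ (eLpNorm g p μ).toReal := by
  have hle := eLpNorm_le_mul_eLpNorm_of_ae_le_mul (c := κ⁻¹)
    (h.mono fun x hx => (le_inv_mul_iff₀ hκ).2 hx) p
  have hreal := ENNReal.toReal_mono (by finiteness) hle
  rw [ENNReal.toReal_mul, ENNReal.toReal_ofReal (inv_nonneg.2 hκ.le)] at hreal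
  exact (le_inv_mul_iff₀ hκ).1 hreal

theorem memLp_two_of_ae_norm_sq_le {f : α → E} {u : α → F} {v : α → G} {a b : ℝ}
    (hf : AEStronglyMeasurable f μ) (hu : MemLp u 2 μ) (hv : MemLp v 2 μ)
    (h : ∀ᵐ x ∂μ, ‖f x‖ ^ 2 ≤ a * ‖u x‖ ^ 2 + b * ‖v x‖ ^ 2) : MemLp f 2 μ :=
  (memLp_two_iff_integrable_sq_norm hf).2 <|
    (((hu.integrable_norm_pow two_ne_zero).const_mul a).add
      ((hv.integrable_norm_pow two_ne_zero).const_mul b)).mono' (hf.norm.pow 2)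
      (h.mono fun x hx => by rwa [Real.norm_of_nonneg (sq_nonneg _)])

theorem toReal_eLpNorm_two_sq_le_of_ae_norm_sq_le {f : α → E} {u : α → F} {v : α → G}
    {a b : ℝ} (hf : MemLp f 2 μ) (hu : MemLp u 2 μ) (hv : MemLp v 2 μ)
    (h : ∀ᵐ x ∂μ, ‖f x‖ ^ 2 ≤ a * ‖u x‖ ^ 2 + b * ‖v x‖ ^ 2) :
    (eLpNorm f 2 μ).toReal ^ 2 ≤
      a * (eLpNorm u 2 μ).toReal ^ 2 + b * (eLpNorm v 2 μ).toReal ^ 2 := by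
  have hu2 := (hu.integrable_norm_pow two_ne_zero).const_mul a
  have hv2 := (hv.integrable_norm_pow two_ne_zero).const_mul b
  rw [hf.toReal_eLpNorm_two_sq, hu.toReal_eLpNorm_two_sq, hv.toReal_eLpNorm_two_sq,
    ← integral_const_mul, ← integral_const_mul, ← integral_add hu2 hv2]
  exact integral_mono_ae (hf.integrable_norm_pow two_ne_zero) (hu2.add hv2) h

end MeasureTheory

/-- Interpolational inequality (3.9) realized for the multiplication operator by `g`
on `L²(μ)`: if `g ≥ κ > 0` a.e., `ψ : (0,∞) → (0,∞)` is Borel measurable, `c > 0` satisfies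
`ψ(t)/ψ(τ) ≤ c·max{1, t/τ}` for all `t, τ ≥ κ`, and `u ≠ 0`, `u, g·u ∈ L²(μ;ℂ)`, then
`(ψ∘g)·u ∈ L²` and `‖(ψ∘g)·u‖₂ ≤ c·√2·‖u‖₂·ψ(‖g·u‖₂/‖u‖₂)`. -/
theorem interpolational_inequality_optimized {X : Type*} [MeasurableSpace X] (μ : Measure X)
    (κ : ℝ) (hκ : 0 < κ) (g : X → ℝ) (hgm : Measurable g) (hgκ : ∀ᵐ x ∂μ, κ ≤ g x)
    (ψ : ℝ → ℝ) (hψm : Measurable ψ) (hψpos : ∀ t : ℝ, 0 < t → 0 < ψ t)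
    (c : ℝ) (hc : 0 < c)
    (hineq : ∀ t : ℝ, κ ≤ t → ∀ τ : ℝ, κ ≤ τ → ψ t / ψ τ ≤ c * max 1 (t / τ))
    (u : X → ℂ) (hu : MemLp u 2 μ) (hune : eLpNorm u 2 μ ≠ 0)
    (hgu : MemLp (fun x => g x • u x) 2 μ) :
    MemLp (fun x => ψ (g x) • u x) 2 μ ∧
      (eLpNorm (fun x => ψ (g x) • u x) 2 μ).toReal ≤
        c * Real.sqrt 2 * (eLpNorm u 2 μ).toReal *
          ψ ((eLpNorm (fun x => g x • u x) 2 μ).toReal / (eLpNorm u 2 μ).toReal) := by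
  set N := (eLpNorm u 2 μ).toReal
  set M := (eLpNorm (fun x => g x • u x) 2 μ).toReal
  set τ := M / N
  have hN : 0 < N := ENNReal.toReal_pos hune hu.eLpNorm_ne_top
  have hκτ : κ ≤ τ := by
    refine (le_div_iff₀ hN).2 (mul_toReal_eLpNorm_le_of_ae_mul_norm_le hκ ?_ hgu.eLpNorm_ne_top)
    filter_upwards [hgκ] with x hx
    rw [norm_smul, Real.norm_of_nonneg (hκ.le.trans hx)]
    gcongr
  have hτ : 0 < τ := hκ.trans_le hκτ
  have hψτ : 0 < ψ τ := hψpos τ hτ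
  have hpointwise : ∀ᵐ x ∂μ, ‖ψ (g x) • u x‖ ^ 2 ≤
      (c * ψ τ) ^ 2 * ‖u x‖ ^ 2 + (c * ψ τ / τ) ^ 2 * ‖g x • u x‖ ^ 2 :=
    hgκ.mono fun x hx => norm_smul_sq_le_of_div_le_mul_max_one (u x)
      (hψpos _ (hκ.trans_le hx)).le hψτ (hineq (g x) hx τ hκτ)
  have hmem := memLp_two_of_ae_norm_sq_le
    ((hψm.comp hgm).aestronglyMeasurable.smul hu.1) hu hgu hpointwise
  refine ⟨hmem, (pow_le_pow_iff_left₀ ENNReal.toReal_nonneg (by positivity) two_ne_zero).1 ?_⟩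
  calc (eLpNorm (fun x => ψ (g x) • u x) 2 μ).toReal ^ 2
      ≤ (c * ψ τ) ^ 2 * N ^ 2 + (c * ψ τ / τ) ^ 2 * M ^ 2 :=
        toReal_eLpNorm_two_sq_le_of_ae_norm_sq_le hmem hu hgu hpointwise
    _ = (c * Real.sqrt 2 * N * ψ τ) ^ 2 := by
        rw [show M = τ * N from (div_mul_cancel₀ M hN.ne').symm]
        field_simp
        rw [Real.sq_sqrt zero_le_two]
        ring
end

section
/- Let (X, μ) be a measure space, κ > 0, and let g : X → ℝ be measurable with g(x) ≥ κ for μ-almost every x. Let ψ : (0,∞) → (0,∞) be Borel measurable and suppose that the function χ(τ) := ψ(√τ)² is concave on [κ²,∞). Let u ∈ L²(μ;ℂ) be nonzero and such that g·u ∈ L²(μ;ℂ). Then (ψ∘g)·u ∈ L²(μ;ℂ) and ‖(ψ∘g)·u‖₂ ≤ ‖u‖₂·ψ(‖g·u‖₂/‖u‖₂). -/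
/-!
Since `g ≥ κ > 0`, `‖ψ(g) u‖₂² = ∫ χ(g²) |u|² dμ`. Jensen's inequality for the concave `χ` and the
probability measure `|u|² dμ / ‖u‖₂²` bounds this by `χ(‖g u‖₂² / ‖u‖₂²) ‖u‖₂²`, which is the
square of the right-hand side. As `χ` need not be continuous at the endpoint `κ²`, Jensen is
proved by integrating a supporting line of `χ` at the mean, and the mean `κ²` is treated
separately: there the weight `|u|²` lives on `{g² = κ²}`. A supporting line at an interior point
also shows that `χ` grows at most linearly, whence `(ψ ∘ g) u ∈ L²`.
-/

open MeasureTheory Filter Set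

theorem ConvexOn.add_rightDeriv_mul_sub_le {S : Set ℝ} {f : ℝ → ℝ} (hf : ConvexOn ℝ S f)
    {m t : ℝ} (hm : m ∈ interior S) (ht : t ∈ S) :
    f m + derivWithin f (Ioi m) m * (t - m) ≤ f t := by
  rcases lt_trichotomy t m with htm | rfl | hmt
  · have hslope : slope f t m ≤ derivWithin f (Ioi m) m :=
      (hf.slope_le_leftDeriv_of_mem_interior ht hm htm).trans
        (hf.leftDeriv_le_rightDeriv_of_mem_interior hm)
    rw [slope_def_field, div_le_iff₀ (sub_pos.2 htm)] at hslope
    linarith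
  · simp
  · have hslope : derivWithin f (Ioi m) m ≤ slope f m t :=
      hf.rightDeriv_le_slope_of_mem_interior hm ht hmt
    rw [slope_def_field, le_div_iff₀ (sub_pos.2 hmt)] at hslope
    linarith

theorem ConcaveOn.exists_le_add_mul_sub {S : Set ℝ} {f : ℝ → ℝ} (hf : ConcaveOn ℝ S f)
    {m : ℝ} (hm : m ∈ interior S) : ∃ c : ℝ, ∀ t ∈ S, f t ≤ f m + c * (t - m) :=
  ⟨-derivWithin (-f) (Ioi m) m, fun t ht => by
    have := hf.neg.add_rightDeriv_mul_sub_le hm ht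
    simp only [Pi.neg_apply] at this
    linarith⟩

theorem norm_real_smul_sq {E : Type*} [NormedAddCommGroup E] [NormedSpace ℝ E] (r : ℝ) (z : E) :
    ‖r • z‖ ^ 2 = r ^ 2 * ‖z‖ ^ 2 := by
  rw [norm_smul, mul_pow, Real.norm_eq_abs, sq_abs]

theorem MeasureTheory.MemLp.eLpNorm_two_toReal_eq_sqrt {X E : Type*} [MeasurableSpace X]
    {μ : Measure X} [NormedAddCommGroup E] {f : X → E} (hf : MemLp f 2 μ) :
    (eLpNorm f 2 μ).toReal = √(∫ x, ‖f x‖ ^ 2 ∂μ) := by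
  have hI : 0 ≤ ∫ x, ‖f x‖ ^ 2 ∂μ := integral_nonneg fun x => by positivity
  rw [hf.eLpNorm_eq_integral_rpow_norm two_ne_zero ENNReal.ofNat_ne_top,
    ENNReal.toReal_ofReal (by positivity), Real.sqrt_eq_rpow]
  norm_num

section WeightedJensen

variable {X : Type*} [MeasurableSpace X] {μ : Measure X} {f : ℝ → ℝ} {w h : X → ℝ}

theorem le_integral_mul_div_integral {a : ℝ} (hw0 : ∀ᵐ x ∂μ, 0 ≤ w x) (hw : Integrable w μ)
    (hhw : Integrable (fun x => h x * w x) μ) (hha : ∀ᵐ x ∂μ, h x ∈ Ici a)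
    (hwpos : 0 < ∫ x, w x ∂μ) :
    a ≤ (∫ x, h x * w x ∂μ) / ∫ x, w x ∂μ := by
  rw [le_div_iff₀ hwpos, ← integral_const_mul]
  refine integral_mono_ae (hw.const_mul a) hhw ?_
  filter_upwards [hw0, hha] with x hwx hhx
  exact mul_le_mul_of_nonneg_right hhx hwx

theorem ConcaveOn.integrable_comp_mul {S : Set ℝ} (hf : ConcaveOn ℝ S f)
    (hS : (interior S).Nonempty) (hf0 : ∀ t ∈ S, 0 ≤ f t)
    (hfhw : AEStronglyMeasurable (fun x => f (h x) * w x) μ) (hw0 : ∀ᵐ x ∂μ, 0 ≤ w x)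
    (hw : Integrable w μ) (hhw : Integrable (fun x => h x * w x) μ) (hhS : ∀ᵐ x ∂μ, h x ∈ S) :
    Integrable (fun x => f (h x) * w x) μ := by
  obtain ⟨m, hm⟩ := hS
  obtain ⟨c, hc⟩ := hf.exists_le_add_mul_sub hm
  refine ((hw.const_mul (f m - c * m)).add (hhw.const_mul c)).mono' hfhw ?_
  filter_upwards [hw0, hhS] with x hwx hhx
  rw [Real.norm_of_nonneg (mul_nonneg (hf0 _ hhx) hwx)]
  have := mul_le_mul_of_nonneg_right (hc _ hhx) hwx
  simp only [Pi.add_apply]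
  linarith

theorem ConcaveOn.integral_comp_mul_le {a : ℝ} (hf : ConcaveOn ℝ (Ici a) f)
    (hw0 : ∀ᵐ x ∂μ, 0 ≤ w x) (hw : Integrable w μ) (hhw : Integrable (fun x => h x * w x) μ)
    (hha : ∀ᵐ x ∂μ, h x ∈ Ici a) (hfhw : Integrable (fun x => f (h x) * w x) μ)
    (hwpos : 0 < ∫ x, w x ∂μ) :
    ∫ x, f (h x) * w x ∂μ ≤ f ((∫ x, h x * w x ∂μ) / ∫ x, w x ∂μ) * ∫ x, w x ∂μ := by
  set m := (∫ x, h x * w x ∂μ) / ∫ x, w x ∂μ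
  have hdev : Integrable (fun x => (h x - m) * w x) μ := by
    simp only [sub_mul]
    exact hhw.sub (hw.const_mul m)
  have hdev0 : ∫ x, (h x - m) * w x ∂μ = 0 := by
    simp only [sub_mul]
    rw [integral_sub hhw (hw.const_mul m), integral_const_mul, div_mul_cancel₀ _ hwpos.ne',
      sub_self]
  rcases (le_integral_mul_div_integral hw0 hw hhw hha hwpos).eq_or_lt with ham | ham
  · have hconst : ∀ᵐ x ∂μ, (h x - m) * w x = 0 := by
      refine (integral_eq_zero_iff_of_nonneg_ae ?_ hdev).1 hdev0
      filter_upwards [hw0, hha] with x hwx hhx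
      exact mul_nonneg (sub_nonneg.2 (ham.ge.trans hhx)) hwx
    rw [← integral_const_mul]
    refine (integral_congr_ae ?_).le
    filter_upwards [hconst] with x hx
    rcases mul_eq_zero.1 hx with hx | hx
    · rw [sub_eq_zero.1 hx]
    · simp [hx]
  · obtain ⟨c, hc⟩ := hf.exists_le_add_mul_sub (by simpa using ham)
    calc ∫ x, f (h x) * w x ∂μ ≤ ∫ x, f m * w x + c * ((h x - m) * w x) ∂μ := by
          refine integral_mono_ae hfhw ((hw.const_mul _).add (hdev.const_mul c)) ?_
          filter_upwards [hw0, hha] with x hwx hhx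
          nlinarith [hc _ hhx]
      _ = f m * ∫ x, w x ∂μ := by
          rw [integral_add (hw.const_mul _) (hdev.const_mul c), integral_const_mul,
            integral_const_mul, hdev0, mul_zero, add_zero]

end WeightedJensen

/-- Variable Hilbert Scale Inequality (3.11) realized for the multiplication operator by `g`
on `L²(μ)`: if `g ≥ κ > 0` a.e., `ψ : (0,∞) → (0,∞)` is Borel measurable with
`χ(τ) = ψ(√τ)²` concave on `[κ²,∞)`, and `u ≠ 0`, `u, g·u ∈ L²(μ;ℂ)`, then
`(ψ∘g)·u ∈ L²` and `‖(ψ∘g)·u‖₂ ≤ ‖u‖₂·ψ(‖g·u‖₂/‖u‖₂)`. -/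
theorem variable_hilbert_scale_inequality {X : Type*} [MeasurableSpace X] (μ : Measure X)
    (κ : ℝ) (hκ : 0 < κ) (g : X → ℝ) (hgm : Measurable g) (hgκ : ∀ᵐ x ∂μ, κ ≤ g x)
    (ψ : ℝ → ℝ) (hψm : Measurable ψ) (hψpos : ∀ t : ℝ, 0 < t → 0 < ψ t)
    (hconc : ConcaveOn ℝ (Set.Ici (κ ^ 2)) (fun τ => (ψ (Real.sqrt τ)) ^ 2))
    (u : X → ℂ) (hu : MemLp u 2 μ) (hune : eLpNorm u 2 μ ≠ 0)
    (hgu : MemLp (fun x => g x • u x) 2 μ) :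
    MemLp (fun x => ψ (g x) • u x) 2 μ ∧
      (eLpNorm (fun x => ψ (g x) • u x) 2 μ).toReal ≤
        (eLpNorm u 2 μ).toReal *
          ψ ((eLpNorm (fun x => g x • u x) 2 μ).toReal / (eLpNorm u 2 μ).toReal) := by
  set χ : ℝ → ℝ := fun τ => ψ (√τ) ^ 2
  have hg2 : ∀ᵐ x ∂μ, g x ^ 2 ∈ Ici (κ ^ 2) :=
    hgκ.mono fun x hx => pow_le_pow_left₀ hκ.le hx 2
  have hw : Integrable (fun x => ‖u x‖ ^ 2) μ := (memLp_two_iff_integrable_sq_norm hu.1).1 hu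
  have hgw : Integrable (fun x => g x ^ 2 * ‖u x‖ ^ 2) μ := by
    simpa only [norm_real_smul_sq] using (memLp_two_iff_integrable_sq_norm hgu.1).1 hgu
  have hψu_sq : (fun x => ‖ψ (g x) • u x‖ ^ 2) =ᵐ[μ] fun x => χ (g x ^ 2) * ‖u x‖ ^ 2 :=
    hgκ.mono fun x hx => by simp only [χ, norm_real_smul_sq, Real.sqrt_sq (hκ.le.trans hx)]
  have hχw : Integrable (fun x => χ (g x ^ 2) * ‖u x‖ ^ 2) μ :=
    hconc.integrable_comp_mul ⟨κ ^ 2 + 1, by simp⟩ (fun _ _ => sq_nonneg _)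
      (((hψm.comp (Real.continuous_sqrt.measurable.comp (hgm.pow_const 2))).pow_const
        2).aestronglyMeasurable.mul hw.aestronglyMeasurable)
      (ae_of_all _ fun _ => sq_nonneg _) hw hgw hg2
  have hψu : MemLp (fun x => ψ (g x) • u x) 2 μ :=
    (memLp_two_iff_integrable_sq_norm
      ((hψm.comp hgm).aestronglyMeasurable.smul hu.aestronglyMeasurable)).2
      (hχw.congr hψu_sq.symm)
  refine ⟨hψu, ?_⟩
  have hwpos : 0 < ∫ x, ‖u x‖ ^ 2 ∂μ := by
    rw [← Real.sqrt_pos, ← hu.eLpNorm_two_toReal_eq_sqrt]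
    exact ENNReal.toReal_pos hune hu.eLpNorm_ne_top
  have hκm := le_integral_mul_div_integral (ae_of_all _ fun _ => sq_nonneg _) hw hgw hg2 hwpos
  have hψm_nonneg : 0 ≤ ψ √((∫ x, g x ^ 2 * ‖u x‖ ^ 2 ∂μ) / ∫ x, ‖u x‖ ^ 2 ∂μ) :=
    (hψpos _ (hκ.trans_le ((Real.le_sqrt hκ.le (by positivity)).2 hκm))).le
  rw [hψu.eLpNorm_two_toReal_eq_sqrt, integral_congr_ae hψu_sq, hu.eLpNorm_two_toReal_eq_sqrt,
    hgu.eLpNorm_two_toReal_eq_sqrt]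
  simp only [norm_real_smul_sq]
  rw [← Real.sqrt_div' _ hwpos.le, ← Real.sqrt_sq hψm_nonneg, ← Real.sqrt_mul' _ (sq_nonneg _), mul_comm]
  exact Real.sqrt_le_sqrt
    (hconc.integral_comp_mul_le (ae_of_all _ fun _ => sq_nonneg _) hw hgw hg2 hχw hwpos)
end

section
/- Let H be a separable complex Hilbert space with a Hilbert (orthonormal) basis (e_j)_{j∈ℕ}, N a normed complex vector space, V a complex vector space, and i_H : H → V, i_N : N → V injective linear maps. Let (ω_j) and (η_j) be bounded sequences of nonzero complex numbers, let R, S : H → H be bounded linear operators with R e_j = ω_j·e_j and S e_j = η_j·e_j for all j, and let R' : H → N be a bounded linear operator with i_N(R'x) = i_H(Rx) for all x ∈ H. For k ∈ ℕ let P_k denote the orthogonal projection of H onto the span of {e_0, …, e_{k−1}}. Then for every nonzero g ∈ H, setting f := R(S g), for each k ∈ ℕ the vector i_H(f − P_k f) lies in the image of i_N, and its unique preimage h_k ∈ N satisfies ‖h_k‖_N ≤ ‖R'‖ · ‖S∘(1−P_k)‖ · ‖g − P_k g‖; moreover the sequence (‖g − P_k g‖)_k is nonincreasing and tends to 0 as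 k → ∞. -/
/-!
`P k` is the `k`-th partial-sum projection of the Schauder basis underlying `e`. Since every
`e j` is an eigenvector of `R` and of `S`, these operators commute with `P k`, so
`f - P k f = R (S (g - P k g))`; as `1 - P k` is idempotent, `h_k := R' (S (g - P k g))` is the
required preimage and the bound is two operator-norm estimates. The tails `g - P k g` decrease
in norm by Pythagoras, `g - P k g` being orthogonal to `e k`, and tend to `0` because the
expansion of `g` converges.
-/

open Filter Topology
open scoped InnerProductSpace

namespace HilbertBasis

variable {ι 𝕜 E : Type*} [RCLike 𝕜] [NormedAddCommGroup E] [InnerProductSpace 𝕜 E]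

/-- Both sides are continuous in `x` and agree on the basis, whose span is dense. -/
theorem inner_apply_of_apply_eq_smul (b : HilbertBasis ι 𝕜 E) {T : E →L[𝕜] E} {τ : ι → 𝕜}
    (hT : ∀ j, T (b j) = τ j • b j) (i : ι) (x : E) : ⟪b i, T x⟫_𝕜 = τ i * ⟪b i, x⟫_𝕜 := by
  classical
  suffices innerSL 𝕜 (b i) ∘L T = τ i • innerSL 𝕜 (b i) from congr($this x)
  refine ContinuousLinearMap.ext_on
    (Submodule.dense_iff_topologicalClosure_eq_top.mpr b.dense_span) ?_
  rintro _ ⟨j, rfl⟩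
  rcases eq_or_ne i j with rfl | hij <;>
    simp [orthonormal_iff_ite.mp b.orthonormal, *]

variable (b : HilbertBasis ℕ 𝕜 E)

theorem apply_proj_eq_proj_apply {T : E →L[𝕜] E} {τ : ℕ → 𝕜}
    (hT : ∀ j, T (b j) = τ j • b j) (n : ℕ) (x : E) :
    T (b.toSchauderBasis.proj n x) = b.toSchauderBasis.proj n (T x) := by
  simp [b.inner_apply_of_apply_eq_smul hT, hT, smul_smul, mul_comm]

theorem inner_sub_proj_eq_zero {i n : ℕ} (hi : i < n) (x : E) :
    ⟪b i, x - b.toSchauderBasis.proj n x⟫_𝕜 = 0 := by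
  simp [inner_sub_right, inner_sum, inner_smul_right, orthonormal_iff_ite.mp b.orthonormal, hi]

theorem sub_proj_eq_sub_proj_succ_add (n : ℕ) (x : E) :
    x - b.toSchauderBasis.proj n x =
      (x - b.toSchauderBasis.proj (n + 1) x) + ⟪b n, x⟫_𝕜 • b n := by
  simp only [SchauderBasis.proj_apply, toSchauderBasis_coord, coe_innerSL_apply,
    toSchauderBasis_basis, Finset.sum_range_succ]
  abel

theorem norm_sub_proj_succ_le (n : ℕ) (x : E) :
    ‖x - b.toSchauderBasis.proj (n + 1) x‖ ≤ ‖x - b.toSchauderBasis.proj n x‖ := by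
  have horth : ⟪x - b.toSchauderBasis.proj (n + 1) x, ⟪b n, x⟫_𝕜 • b n⟫_𝕜 = 0 := by
    rw [inner_smul_right, inner_eq_zero_symm.mp (b.inner_sub_proj_eq_zero n.lt_succ_self x),
      mul_zero]
  have hpyth := norm_add_sq_eq_norm_sq_add_norm_sq_of_inner_eq_zero _ _ horth
  rw [← b.sub_proj_eq_sub_proj_succ_add n x] at hpyth
  exact (mul_self_le_mul_self_iff (norm_nonneg _) (norm_nonneg _)).mpr
    (hpyth ▸ le_add_of_nonneg_right (mul_self_nonneg _))

theorem antitone_norm_sub_proj (x : E) :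
    Antitone fun n => ‖x - b.toSchauderBasis.proj n x‖ :=
  antitone_nat_of_succ_le fun n => b.norm_sub_proj_succ_le n x

theorem tendsto_norm_sub_proj (x : E) :
    Tendsto (fun n => ‖x - b.toSchauderBasis.proj n x‖) atTop (𝓝 0) := by
  simpa using ((b.toSchauderBasis.tendsto_proj x).const_sub x).norm

end HilbertBasis

theorem spectral_expansion_estimate_basis_general {H : Type*} [NormedAddCommGroup H]
    [InnerProductSpace ℂ H]
    {N : Type*} [NormedAddCommGroup N] [NormedSpace ℂ N]
    {V : Type*} [AddCommGroup V] [Module ℂ V]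
    (iH : H →ₗ[ℂ] V)
    (iN : N →ₗ[ℂ] V)
    (e : HilbertBasis ℕ ℂ H)
    (ω η : ℕ → ℂ)
    (R S : H →L[ℂ] H) (hRe : ∀ j, R (e j) = ω j • e j) (hSe : ∀ j, S (e j) = η j • e j)
    (R' : H →L[ℂ] N) (hR' : ∀ x : H, iN (R' x) = iH (R x))
    (P : ℕ → H →L[ℂ] H)
    (hP : ∀ k, P k = ∑ j ∈ Finset.range k, (innerSL ℂ (e j)).smulRight (e j))
    (g : H) :
    (∀ k : ℕ, ∃ h : N, iN h = iH (R (S g) - P k (R (S g))) ∧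
      ‖h‖ ≤ ‖R'‖ * ‖S ∘L (ContinuousLinearMap.id ℂ H - P k)‖ * ‖g - P k g‖) ∧
    Antitone (fun k : ℕ => ‖g - P k g‖) ∧
    Tendsto (fun k : ℕ => ‖g - P k g‖) atTop (nhds 0) := by
  obtain rfl : P = e.toSchauderBasis.proj := funext fun k => (hP k).trans rfl
  refine ⟨fun k => ?_, e.antitone_norm_sub_proj g, e.tendsto_norm_sub_proj g⟩
  set Q := e.toSchauderBasis.proj k
  have hfactor : R (S g) - Q (R (S g)) = R (S (g - Q g)) := by
    rw [map_sub, map_sub, e.apply_proj_eq_proj_apply hSe, e.apply_proj_eq_proj_apply hRe]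
  have hidem : (S ∘L (ContinuousLinearMap.id ℂ H - Q)) (g - Q g) = S (g - Q g) := by
    have hQ : Q (g - Q g) = 0 := by rw [map_sub, SchauderBasis.proj_comp, min_self, sub_self]
    rw [ContinuousLinearMap.comp_apply, sub_apply,
      ContinuousLinearMap.id_apply, hQ, sub_zero]
  refine ⟨R' (S (g - Q g)), by rw [hR', hfactor], ?_⟩
  calc ‖R' (S (g - Q g))‖ ≤ ‖R'‖ * ‖S (g - Q g)‖ := R'.le_opNorm _
    _ ≤ ‖R'‖ * (‖S ∘L (ContinuousLinearMap.id ℂ H - Q)‖ * ‖g - Q g‖) := by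
      rw [← hidem]
      gcongr
      exact ContinuousLinearMap.le_opNorm _ _
    _ = ‖R'‖ * ‖S ∘L (ContinuousLinearMap.id ℂ H - Q)‖ * ‖g - Q g‖ := (mul_assoc _ _ _).symm

/-- Quantitative estimate (6.12) of Theorem 6.5: let `H` be a separable complex Hilbert
space with Hilbert basis `(e_j)`, `N` a normed complex space, both algebraically embedded
in a complex vector space `V`. Let `R, S` be bounded operators diagonal in the basis with
bounded nonzero eigenvalue sequences `(ω_j)`, `(η_j)`, and `R' : H → N` bounded with
`i_N (R' x) = i_H (R x)`. With `P_k` the orthogonal projection onto the span of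
`e_0, …, e_{k-1}` and `f = R (S g)` for nonzero `g`, the vector `i_H (f - P_k f)` has a
preimage `h_k ∈ N` with `‖h_k‖ ≤ ‖R'‖·‖S∘(1-P_k)‖·‖g - P_k g‖`; moreover
`(‖g - P_k g‖)_k` is nonincreasing and tends to `0`. -/
theorem spectral_expansion_estimate_basis {H : Type*} [NormedAddCommGroup H]
    [InnerProductSpace ℂ H] [CompleteSpace H] [TopologicalSpace.SeparableSpace H]
    {N : Type*} [NormedAddCommGroup N] [NormedSpace ℂ N]
    {V : Type*} [AddCommGroup V] [Module ℂ V]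
    (iH : H →ₗ[ℂ] V) (hiH : Function.Injective iH)
    (iN : N →ₗ[ℂ] V) (hiN : Function.Injective iN)
    (e : HilbertBasis ℕ ℂ H)
    (ω η : ℕ → ℂ) (hωbdd : ∃ M : ℝ, ∀ j, ‖ω j‖ ≤ M) (hηbdd : ∃ M : ℝ, ∀ j, ‖η j‖ ≤ M)
    (hω : ∀ j, ω j ≠ 0) (hη : ∀ j, η j ≠ 0)
    (R S : H →L[ℂ] H) (hRe : ∀ j, R (e j) = ω j • e j) (hSe : ∀ j, S (e j) = η j • e j)
    (R' : H →L[ℂ] N) (hR' : ∀ x : H, iN (R' x) = iH (R x))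
    (P : ℕ → H →L[ℂ] H)
    (hP : ∀ k, P k = ∑ j ∈ Finset.range k, (innerSL ℂ (e j)).smulRight (e j))
    (g : H) (hg : g ≠ 0) :
    (∀ k : ℕ, ∃ h : N, iN h = iH (R (S g) - P k (R (S g))) ∧
      ‖h‖ ≤ ‖R'‖ * ‖S ∘L (ContinuousLinearMap.id ℂ H - P k)‖ * ‖g - P k g‖) ∧
    Antitone (fun k : ℕ => ‖g - P k g‖) ∧
    Tendsto (fun k : ℕ => ‖g - P k g‖) atTop (nhds 0) :=
  spectral_expansion_estimate_basis_general iH iN e ω η R S hRe hSe R' hR' P hP g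
end
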